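/- arXiv:2305.07752 — 4 statements merged into one kernel-verified Lean document; each statement's English description precedes it below -/
import Mathlib

section
/- For every t ≥ 1 there exists a planar graph that contains a totally odd immersion of K_t. -/
open SimpleGraph

/-- `G` contains a totally odd immersion of the complete graph `K t`. -/
def TotallyOddCliqueImmersion {V : Type*} (G : SimpleGraph V) (t : ℕ) : Prop :=
  ∃ φ : Fin t ↪ V, ∃ P : (i j : Fin t) → G.Walk (φ i) (φ j),
    (∀ i j : Fin t, i < j → (P i j).IsPath) ∧
    (∀ i j : Fin t, i < j → Odd (P i j).length) ∧
    (∀ i j i' j' : Fin t, i < j → i' < j' → (i, j) ≠ (i', j') →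
      List.Disjoint (P i j).edges (P i' j').edges)

/-- `G` contains a subdivision of `H`: internally vertex-disjoint paths joining the
images of the vertices of `H`, with no terminal as an interior vertex of any path. -/
def ContainsSubdivision {V U : Type*} (G : SimpleGraph V) (H : SimpleGraph U) : Prop :=
  ∃ φ : U ↪ V, ∃ P : ∀ ⦃u w : U⦄, H.Adj u w → G.Walk (φ u) (φ w),
    (∀ ⦃u w : U⦄ (h : H.Adj u w), (P h).IsPath) ∧
    (∀ ⦃u w : U⦄ (h : H.Adj u w), P h.symm = (P h).reverse) ∧
    (∀ ⦃u w : U⦄ (h : H.Adj u w) (z : U), φ z ∈ (P h).support → z = u ∨ z = w) ∧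
    (∀ ⦃u w u' w' : U⦄ (h : H.Adj u w) (h' : H.Adj u' w'), s(u, w) ≠ s(u', w') →
      ∀ x, x ∈ (P h).support → x ∈ (P h').support →
        (x = φ u ∨ x = φ w) ∧ (x = φ u' ∨ x = φ w'))

/-- Planarity, via Kuratowski's theorem: no subdivision of `K₅` or of `K_{3,3}`. -/
def IsPlanar {V : Type*} (G : SimpleGraph V) : Prop :=
  ¬ ContainsSubdivision G (⊤ : SimpleGraph (Fin 5)) ∧
  ¬ ContainsSubdivision G (completeBipartiteGraph (Fin 3) (Fin 3))

namespace TOI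

abbrev Vt (t : ℕ) := Fin t ⊕ (Fin t × Fin t × Fin t × Bool)

def R (t : ℕ) : Vt t → Vt t → Prop
  | Sum.inl a, Sum.inr (i, j, k, b) => a = k ∧ i ≤ k ∧ k < j ∧ b = false
  | Sum.inr (i, j, k, b), Sum.inl a =>
      (a : ℕ) = (k : ℕ) + 1 ∧ i ≤ k ∧ k < j ∧ (b = true ↔ k = i)
  | Sum.inr (i, j, k, b), Sum.inr (i', j', k', b') =>
      i = i' ∧ j = j' ∧ k = k' ∧ k = i ∧ b = false ∧ b' = true
  | Sum.inl _, Sum.inl _ => False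

def G (t : ℕ) : SimpleGraph (Vt t) where
  Adj x y := R t x y ∨ R t y x
  symm := ⟨fun _ _ h => h.symm⟩
  loopless := by
    constructor
    rintro (a | ⟨i, j, k, b⟩) h <;> simp only [R] at h
    · tauto
    · rcases h with ⟨_, _, _, _, h1, h2⟩ | ⟨_, _, _, _, h1, h2⟩ <;> simp_all

lemma G_adj {t : ℕ} {x y : Vt t} : (G t).Adj x y ↔ R t x y ∨ R t y x := Iff.rfl

def rho (t : ℕ) : Vt t → ℕ
  | Sum.inl a => 3 * a
  | Sum.inr (_, _, k, b) => 3 * k + (if b then 2 else 1)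

lemma adj_rho {t : ℕ} {x y : Vt t} (h : (G t).Adj x y) :
    rho t y = rho t x + 1 ∨ rho t x = rho t y + 1 ∨
    (rho t y = rho t x + 2 ∧ (rho t x + 1) % 3 ≠ 0) ∨
    (rho t x = rho t y + 2 ∧ (rho t y + 1) % 3 ≠ 0) := by
  rcases x with a | ⟨i, j, k, b⟩ <;> rcases y with a' | ⟨i', j', k', b'⟩ <;>
    rw [G_adj] at h <;> rcases h with h | h <;> simp only [R] at h <;>
    simp only [rho, Fin.ext_iff, Fin.le_def, Fin.lt_def] at * <;>
    (try cases b) <;> (try cases b') <;> simp_all <;> omega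

lemma eq_inl_of_rho {t : ℕ} (z : Vt t) (h : rho t z % 3 = 0) :
    ∃ a : Fin t, z = Sum.inl a ∧ 3 * (a : ℕ) = rho t z := by
  rcases z with a | ⟨i, j, k, b⟩
  · exact ⟨a, rfl, rfl⟩
  · exfalso; rcases b <;> simp [rho] at h <;> omega

lemma ivt {t : ℕ} {x y : Vt t} (W : (G t).Walk x y) (m : ℕ) (hm : m % 3 = 0)
    (h1 : rho t x ≤ m) (h2 : m ≤ rho t y) : ∃ z ∈ W.support, rho t z = m := by
  induction W with
  | nil => exact ⟨_, Walk.start_mem_support _, by omega⟩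
  | @cons u v w h W ih =>
    by_cases hc : rho t v ≤ m
    · obtain ⟨z, hz, hz2⟩ := ih hc h2
      exact ⟨z, by simp [hz], hz2⟩
    · refine ⟨u, by simp, ?_⟩
      have := adj_rho h
      omega

lemma adj_hub_left {t : ℕ} (i j k : Fin t) (h1 : i ≤ k) (h2 : k < j) :
    (G t).Adj (Sum.inl k) (Sum.inr (i, j, k, false)) := G_adj.mpr (Or.inl ⟨rfl, h1, h2, rfl⟩)

lemma adj_to_hub {t : ℕ} (i j k a : Fin t) (h1 : i ≤ k) (h2 : k < j)
    (ha : (a : ℕ) = (k : ℕ) + 1) (b : Bool) (hb : b = true ↔ k = i) :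
    (G t).Adj (Sum.inr (i, j, k, b)) (Sum.inl a) := G_adj.mpr (Or.inl ⟨ha, h1, h2, hb⟩)

lemma adj_AB {t : ℕ} (i j : Fin t) (h : i < j) :
    (G t).Adj (Sum.inr (i, j, i, false)) (Sum.inr (i, j, i, true)) :=
  G_adj.mpr (Or.inl ⟨rfl, rfl, rfl, rfl, rfl, rfl⟩)

def mWalk (t : ℕ) (i j : Fin t) : (m k : ℕ) → (hik : (i : ℕ) < k) → (hkm : k + m = (j : ℕ)) →
    (G t).Walk (Sum.inl ⟨k, by have := j.isLt; omega⟩) (Sum.inl j)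
  | 0, k, hik, hkm => Walk.nil.copy (by rw [show (⟨k, by have := j.isLt; omega⟩ : Fin t) = j from Fin.ext (show k = (j : ℕ) by omega)]) rfl
  | m + 1, k, hik, hkm =>
      Walk.cons
        (adj_hub_left i j ⟨k, by have := j.isLt; omega⟩
          (by rw [Fin.le_def]; exact (by omega : (i : ℕ) ≤ k)) (by rw [Fin.lt_def]; exact (by omega : k < (j : ℕ))))
        (Walk.cons
          (adj_to_hub i j ⟨k, by have := j.isLt; omega⟩ ⟨k + 1, by have := j.isLt; omega⟩
            (by rw [Fin.le_def]; exact (by omega : (i : ℕ) ≤ k)) (by rw [Fin.lt_def]; exact (by omega : k < (j : ℕ))) rfl false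
            (⟨fun hh => absurd hh (by simp), fun hh => absurd (show k = (i : ℕ) from congrArg Fin.val hh) (by omega)⟩))
          (mWalk t i j m (k + 1) (by omega) (by omega)))

lemma mWalk_length {t : ℕ} (i j : Fin t) : ∀ (m k : ℕ) (hik : (i : ℕ) < k) (hkm : k + m = (j : ℕ)),
    (mWalk t i j m k hik hkm).length = 2 * m
  | 0, k, hik, hkm => by simp [mWalk]
  | m + 1, k, hik, hkm => by
      simp only [mWalk, Walk.length_cons, mWalk_length i j m (k + 1)]
      omega

lemma mWalk_support {t : ℕ} (i j : Fin t) :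
    ∀ (m k : ℕ) (hik : (i : ℕ) < k) (hkm : k + m = (j : ℕ)),
    (mWalk t i j m k hik hkm).support.Nodup ∧
      ∀ x ∈ (mWalk t i j m k hik hkm).support, 3 * k ≤ rho t x
  | 0, k, hik, hkm => by
      constructor
      · simp [mWalk, Walk.support_copy]
      · intro x hx
        simp only [mWalk, Walk.support_copy, Walk.support_nil, List.mem_singleton] at hx
        subst hx
        simp [rho, Fin.val_mk]
        all_goals omega
  | m + 1, k, hik, hkm => by
      obtain ⟨ih1, ih2⟩ := mWalk_support i j m (k + 1) (by omega) (by omega)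
      have hlb : ∀ x ∈ (mWalk t i j (m + 1) k hik hkm).support, 3 * k ≤ rho t x := by
        intro x hx
        simp only [mWalk, Walk.support_cons, List.mem_cons] at hx
        rcases hx with rfl | rfl | hx
        · simp [rho, Fin.val_mk]; all_goals omega
        · simp [rho, Fin.val_mk]; all_goals omega
        · have := ih2 _ hx; omega
      refine ⟨?_, hlb⟩
      simp only [mWalk, Walk.support_cons, List.nodup_cons]
      refine ⟨?_, ?_, ih1⟩
      · intro hx
        rcases List.mem_cons.mp hx with hx | hx
        · have := congrArg (rho t) hx
          simp [rho, Fin.val_mk] at this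
        · have := ih2 _ hx
          simp [rho, Fin.val_mk] at this
      · intro hx
        have := ih2 _ hx
        simp [rho, Fin.val_mk] at this
        omega

lemma mWalk_edges {t : ℕ} (i j : Fin t) :
    ∀ (m k : ℕ) (hik : (i : ℕ) < k) (hkm : k + m = (j : ℕ)),
    ∀ e ∈ (mWalk t i j m k hik hkm).edges,
      (∃ k' b, (Sum.inr (i, j, k', b) : Vt t) ∈ e) ∧
      (∀ (i' j' k' : Fin t) (b' : Bool), (Sum.inr (i', j', k', b') : Vt t) ∈ e → i' = i ∧ j' = j)
  | 0, k, hik, hkm => by simp [mWalk, Walk.edges_copy]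
  | m + 1, k, hik, hkm => by
      intro e he
      simp only [mWalk, Walk.edges_cons, List.mem_cons] at he
      rcases he with rfl | rfl | he
      · constructor
        · exact ⟨_, _, Sym2.mem_mk_right _ _⟩
        · intro i' j' k' b' hmem
          rw [Sym2.mem_iff] at hmem
          rcases hmem with hmem | hmem
          · exact absurd hmem (by simp)
          · obtain ⟨h1, h2, -⟩ := Prod.mk.injEq .. ▸ (Sum.inr.inj hmem)
            exact ⟨h1, by simpa using h2⟩
      · constructor
        · exact ⟨_, _, Sym2.mem_mk_left _ _⟩
        · intro i' j' k' b' hmem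
          rw [Sym2.mem_iff] at hmem
          rcases hmem with hmem | hmem
          · obtain ⟨h1, h2, -⟩ := Prod.mk.injEq .. ▸ (Sum.inr.inj hmem)
            exact ⟨h1, by simpa using h2⟩
          · exact absurd hmem (by simp)
      · exact mWalk_edges i j m (k + 1) (by omega) (by omega) e he


def fullWalk (t : ℕ) (i j : Fin t) (hij : i < j) : (G t).Walk (Sum.inl i) (Sum.inl j) :=
  Walk.cons (adj_hub_left i j i le_rfl hij)
    (Walk.cons (adj_AB i j hij)
      (Walk.cons
        (adj_to_hub i j i ⟨(i : ℕ) + 1, by have := j.isLt; have := Fin.lt_def.mp hij; omega⟩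
          le_rfl hij rfl true (iff_of_true rfl rfl))
        (mWalk t i j ((j : ℕ) - ((i : ℕ) + 1)) ((i : ℕ) + 1)
          (by omega) (by have := Fin.lt_def.mp hij; omega))))

lemma fullWalk_length {t : ℕ} (i j : Fin t) (hij : i < j) :
    (fullWalk t i j hij).length = 2 * ((j : ℕ) - (i : ℕ)) + 1 := by
  have := Fin.lt_def.mp hij
  simp [fullWalk, mWalk_length]
  omega

lemma fullWalk_isPath {t : ℕ} (i j : Fin t) (hij : i < j) : (fullWalk t i j hij).IsPath := by
  have hij' := Fin.lt_def.mp hij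
  obtain ⟨h1, h2⟩ := mWalk_support i j ((j : ℕ) - ((i : ℕ) + 1)) ((i : ℕ) + 1)
    (by omega) (by omega)
  apply Walk.IsPath.mk'
  simp only [fullWalk, Walk.support_cons, List.nodup_cons, List.mem_cons]
  refine ⟨?_, ?_, ?_, h1⟩
  · rintro (e | e | e)
    · have := congrArg (rho t) e; simp [rho] at this
    · have := congrArg (rho t) e; simp [rho] at this
    · have := h2 _ e; simp [rho] at this <;> omega
  · rintro (e | e)
    · have := congrArg (rho t) e; simp [rho] at this
    · have := h2 _ e; simp [rho] at this <;> omega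
  · intro e
    have := h2 _ e; simp [rho] at this <;> omega

lemma fullWalk_edges {t : ℕ} (i j : Fin t) (hij : i < j) :
    ∀ e ∈ (fullWalk t i j hij).edges,
      (∃ (k' : Fin t) (b : Bool), (Sum.inr (i, j, k', b) : Vt t) ∈ e) ∧
      (∀ (i' j' k' : Fin t) (b' : Bool), (Sum.inr (i', j', k', b') : Vt t) ∈ e →
        i' = i ∧ j' = j) := by
  intro e he
  simp only [fullWalk, Walk.edges_cons, List.mem_cons] at he
  rcases he with rfl | rfl | rfl | he
  · constructor
    · exact ⟨_, _, Sym2.mem_mk_right _ _⟩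
    · intro i' j' k' b' hmem
      rw [Sym2.mem_iff] at hmem
      rcases hmem with hmem | hmem
      · exact absurd hmem (by simp)
      · obtain ⟨ha, hb, -⟩ := Prod.mk.injEq .. ▸ (Sum.inr.inj hmem)
        exact ⟨ha, by simpa using hb⟩
  · constructor
    · exact ⟨_, _, Sym2.mem_mk_left _ _⟩
    · intro i' j' k' b' hmem
      rw [Sym2.mem_iff] at hmem
      rcases hmem with hmem | hmem <;>
      · obtain ⟨ha, hb, -⟩ := Prod.mk.injEq .. ▸ (Sum.inr.inj hmem)
        exact ⟨ha, by simpa using hb⟩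
  · constructor
    · exact ⟨_, _, Sym2.mem_mk_left _ _⟩
    · intro i' j' k' b' hmem
      rw [Sym2.mem_iff] at hmem
      rcases hmem with hmem | hmem
      · obtain ⟨ha, hb, -⟩ := Prod.mk.injEq .. ▸ (Sum.inr.inj hmem)
        exact ⟨ha, by simpa using hb⟩
      · exact absurd hmem (by simp)
  · exact mWalk_edges i j _ _ _ _ e he

def thePaths (t : ℕ) (i j : Fin t) : (G t).Walk (Sum.inl i) (Sum.inl j) :=
  if h : i < j then fullWalk t i j h
  else if h' : j < i then (fullWalk t j i h').reverse
  else Walk.nil.copy rfl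
    (by rw [show i = j from le_antisymm (not_lt.mp h') (not_lt.mp h)])

theorem immersion (t : ℕ) : TotallyOddCliqueImmersion (G t) t := by
  refine ⟨⟨Sum.inl, fun _ _ h => Sum.inl.inj h⟩, thePaths t, ?_, ?_, ?_⟩
  · intro i j hij
    simpa [thePaths, dif_pos hij] using fullWalk_isPath i j hij
  · intro i j hij
    rw [show thePaths t i j = fullWalk t i j hij from dif_pos hij, fullWalk_length i j hij]
    exact ⟨(j : ℕ) - (i : ℕ), rfl⟩
  · intro i j i' j' hij hij' hne
    rw [show thePaths t i j = fullWalk t i j hij from dif_pos hij,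
      show thePaths t i' j' = fullWalk t i' j' hij' from dif_pos hij']
    intro e he he'
    obtain ⟨⟨k1, b1, hmem⟩, -⟩ := fullWalk_edges i j hij e he
    obtain ⟨-, hall⟩ := fullWalk_edges i' j' hij' e he'
    obtain ⟨e1, e2⟩ := hall i j k1 b1 hmem
    exact hne (by rw [e1, e2])

lemma nbr_char {t : ℕ} {i j k : Fin t} {b : Bool} {y : Vt t}
    (h : (G t).Adj (Sum.inr (i, j, k, b)) y) :
    (b = false ∧ y = Sum.inl k) ∨
    ((b = true ↔ k = i) ∧ ∃ a : Fin t, (a : ℕ) = (k : ℕ) + 1 ∧ y = Sum.inl a) ∨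
    (k = i ∧ b = false ∧ y = Sum.inr (i, j, k, true)) ∨
    (k = i ∧ b = true ∧ y = Sum.inr (i, j, k, false)) := by
  rcases y with a | ⟨i', j', k', b'⟩ <;> rcases G_adj.mp h with h | h <;> simp only [R] at h
  · exact Or.inr (Or.inl ⟨h.2.2.2, a, h.1, rfl⟩)
  · obtain ⟨h1, -, -, h4⟩ := h
    exact Or.inl ⟨h4, by rw [h1]⟩
  · obtain ⟨rfl, rfl, rfl, hki, hb, hb'⟩ := h
    exact Or.inr (Or.inr (Or.inl ⟨hki, hb, by rw [hb']⟩))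
  · obtain ⟨rfl, rfl, rfl, hki, hb', hb⟩ := h
    exact Or.inr (Or.inr (Or.inr ⟨hki, hb, by rw [hb']⟩))

lemma hub_of_three {t : ℕ} {v x y z : Vt t}
    (hx : (G t).Adj v x) (hy : (G t).Adj v y) (hz : (G t).Adj v z)
    (hxy : x ≠ y) (hxz : x ≠ z) (hyz : y ≠ z) : ∃ a : Fin t, v = Sum.inl a := by
  rcases v with a | ⟨i, j, k, b⟩
  · exact ⟨a, rfl⟩
  exfalso
  have cx := nbr_char hx
  have cy := nbr_char hy
  have cz := nbr_char hz
  rcases cx with ⟨hb1, rfl⟩ | ⟨hb1, a1, ha1, rfl⟩ | ⟨hk1, hb1, rfl⟩ | ⟨hk1, hb1, rfl⟩ <;>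
    rcases cy with ⟨hb2, rfl⟩ | ⟨hb2, a2, ha2, rfl⟩ | ⟨hk2, hb2, rfl⟩ | ⟨hk2, hb2, rfl⟩ <;>
    rcases cz with ⟨hb3, rfl⟩ | ⟨hb3, a3, ha3, rfl⟩ | ⟨hk3, hb3, rfl⟩ | ⟨hk3, hb3, rfl⟩ <;>
    simp_all [Fin.ext_iff] <;> omega

lemma no_subdiv (t : ℕ) {U : Type} [Fintype U] [DecidableEq U] [Nonempty U]
    (H : SimpleGraph U)
    (h3 : ∀ u : U, ∃ w1 w2 w3 : U,
      H.Adj u w1 ∧ H.Adj u w2 ∧ H.Adj u w3 ∧ w1 ≠ w2 ∧ w1 ≠ w3 ∧ w2 ≠ w3)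
    (havoid : ∀ u s : U, ∃ w : U, H.Adj u w ∧ w ≠ s) :
    ¬ ContainsSubdivision (G t) H := by
  rintro ⟨φ, P, hpath, hsymm, hterm, hdisj⟩
  have key : ∀ ⦃u w : U⦄ (h : H.Adj u w), ∃ x : Vt t,
      (G t).Adj (φ u) x ∧ x ∈ (P h).support ∧ x ≠ φ u := by
    intro u w h
    have hne : φ u ≠ φ w := fun e => h.ne (φ.injective e)
    obtain ⟨x, hadj, q, hq⟩ := Walk.exists_eq_cons_of_ne hne (P h)
    have hp := hpath h
    rw [hq, Walk.cons_isPath_iff] at hp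
    refine ⟨x, hadj, ?_, ?_⟩
    · rw [hq, Walk.support_cons]
      exact List.mem_cons_of_mem _ q.start_mem_support
    · intro e
      exact hp.2 (e ▸ q.start_mem_support)
  have hhub : ∀ u : U, ∃ a : Fin t, φ u = Sum.inl a := by
    intro u
    obtain ⟨w1, w2, w3, ha1, ha2, ha3, h12, h13, h23⟩ := h3 u
    obtain ⟨x1, b1, m1, n1⟩ := key ha1
    obtain ⟨x2, b2, m2, n2⟩ := key ha2
    obtain ⟨x3, b3, m3, n3⟩ := key ha3
    have hdist : ∀ (wa wb : U) (haa : H.Adj u wa) (hbb : H.Adj u wb), wa ≠ wb →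
        ∀ xa, xa ∈ (P haa).support → xa ∈ (P hbb).support → xa ≠ φ u → False := by
      intro wa wb haa hbb hne xa hma hmb hxa
      have hs : s(u, wa) ≠ s(u, wb) := by
        intro hcontra
        rw [Sym2.eq_iff] at hcontra
        rcases hcontra with ⟨-, e⟩ | ⟨e1, -⟩
        · exact hne e
        · exact hbb.ne e1
      have hq := hdisj haa hbb hs xa hma hmb
      rcases hq.1 with e | e
      · exact hxa e
      · rcases hq.2 with e' | e'
        · exact hxa e'
        · exact hne (φ.injective (e.symm.trans e'))
    have d12 : x1 ≠ x2 := fun e => hdist w1 w2 ha1 ha2 h12 x1 m1 (e ▸ m2) n1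
    have d13 : x1 ≠ x3 := fun e => hdist w1 w3 ha1 ha3 h13 x1 m1 (e ▸ m3) n1
    have d23 : x2 ≠ x3 := fun e => hdist w2 w3 ha2 ha3 h23 x2 m2 (e ▸ m3) n2
    exact hub_of_three b1 b2 b3 d12 d13 d23
  choose p hp using hhub
  have pinj : Function.Injective p := fun a b e => φ.injective (by rw [hp a, hp b, e])
  obtain ⟨u0, -, hu0⟩ := Finset.exists_min_image Finset.univ (fun u => (p u : ℕ))
    ⟨Classical.arbitrary U, Finset.mem_univ _⟩
  obtain ⟨w', hw'1, hw'2⟩ := havoid u0 u0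
  obtain ⟨s0, hs0mem, hs0⟩ := Finset.exists_min_image (Finset.univ.erase u0)
    (fun u => (p u : ℕ)) ⟨w', by simp [hw'2]⟩
  have hs0u0 : s0 ≠ u0 := (Finset.mem_erase.mp hs0mem).1
  obtain ⟨w, hwadj, hws0⟩ := havoid u0 s0
  have hwu0 : w ≠ u0 := Ne.symm hwadj.ne
  have hlt1 : (p u0 : ℕ) < p s0 :=
    lt_of_le_of_ne (hu0 s0 (Finset.mem_univ _))
      (fun e => hs0u0 (pinj (Fin.ext e.symm)))
  have hlt2 : (p s0 : ℕ) < p w :=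
    lt_of_le_of_ne (hs0 w (by simp [hwu0]))
      (fun e => hws0 (pinj (Fin.ext e.symm)))
  obtain ⟨z, hzmem, hz⟩ := ivt (P hwadj) (3 * (p s0 : ℕ)) (by omega)
    (by rw [hp u0]; simp [rho]; omega) (by rw [hp w]; simp [rho]; omega)
  obtain ⟨a, rfl, haa⟩ := eq_inl_of_rho z (by omega)
  have hzs0 : (Sum.inl a : Vt t) = φ s0 := by
    rw [hp s0]
    exact congrArg Sum.inl (Fin.ext (by omega))
  rcases hterm hwadj s0 (hzs0 ▸ hzmem) with e | e
  · exact hs0u0 e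
  · exact hws0 e.symm

lemma cbg_adj (x y : Fin 3 ⊕ Fin 3) :
    (completeBipartiteGraph (Fin 3) (Fin 3)).Adj x y ↔
      (x.isLeft ∧ y.isRight ∨ x.isRight ∧ y.isLeft) := Iff.rfl

theorem planar (t : ℕ) : IsPlanar (G t) := by
  constructor
  · exact no_subdiv t _ (by simp only [top_adj]; decide) (by simp only [top_adj]; decide)
  · exact no_subdiv t _ (by simp only [cbg_adj]; decide) (by simp only [cbg_adj]; decide)

section Transport

variable {V W : Type*} (Gr : SimpleGraph V) (e : V ≃ W)

lemma transport_imm (t : ℕ) (h : TotallyOddCliqueImmersion Gr t) :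
    TotallyOddCliqueImmersion (Gr.comap e.symm) t := by
  obtain ⟨φ, P, hpath, hodd, hdisj⟩ := h
  have hf : ∀ {a b : V}, Gr.Adj a b → (Gr.comap e.symm).Adj (e a) (e b) := by
    intro a b hab
    simpa [SimpleGraph.comap] using hab
  let f : Gr →g Gr.comap e.symm := ⟨e, hf⟩
  have finj : Function.Injective f := fun a b hab => e.injective hab
  refine ⟨φ.trans e.toEmbedding, fun i j => (P i j).map f, ?_, ?_, ?_⟩
  · intro i j hij
    exact Walk.map_isPath_of_injective finj (hpath i j hij)
  · intro i j hij
    show Odd ((P i j).map f).length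
    rw [Walk.length_map]
    exact hodd i j hij
  · intro i j i' j' hij hij' hne x hx hx'
    change x ∈ ((P i j).map f).edges at hx
    change x ∈ ((P i' j').map f).edges at hx'
    rw [Walk.edges_map, List.mem_map] at hx hx'
    obtain ⟨a, ha, rfl⟩ := hx
    obtain ⟨b, hb, hba⟩ := hx'
    have : b = a := Sym2.map.injective finj hba
    exact hdisj i j i' j' hij hij' hne ha (this ▸ hb)

lemma transport_subdiv {U : Type*} (H : SimpleGraph U)
    (h : ContainsSubdivision (Gr.comap e.symm) H) : ContainsSubdivision Gr H := by
  obtain ⟨φ, P, hpath, hsymm, hterm, hdisj⟩ := h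
  have hg : ∀ {a b : W}, (Gr.comap e.symm).Adj a b → Gr.Adj (e.symm a) (e.symm b) :=
    fun hab => hab
  let g : Gr.comap e.symm →g Gr := ⟨e.symm, hg⟩
  have ginj : Function.Injective g := fun a b hab => e.symm.injective hab
  refine ⟨φ.trans e.symm.toEmbedding, fun u w h => (P h).map g, ?_, ?_, ?_, ?_⟩
  · intro u w h
    exact Walk.map_isPath_of_injective ginj (hpath h)
  · intro u w h
    show ((P h.symm).map g) = ((P h).map g).reverse
    rw [hsymm h, ← Walk.reverse_map]
  · intro u w h z hz
    change (φ.trans e.symm.toEmbedding) z ∈ ((P h).map g).support at hz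
    rw [Walk.support_map, List.mem_map] at hz
    obtain ⟨x, hx, hxe⟩ := hz
    have : x = φ z := e.symm.injective hxe
    exact hterm h z (this ▸ hx)
  · intro u w u' w' h h' hne x hx hx'
    change x ∈ ((P h).map g).support at hx
    change x ∈ ((P h').map g).support at hx'
    rw [Walk.support_map, List.mem_map] at hx hx'
    obtain ⟨a, ha, rfl⟩ := hx
    obtain ⟨b, hb, hba⟩ := hx'
    have hab : b = a := e.symm.injective hba
    subst hab
    obtain ⟨c1, c2⟩ := hdisj h h' hne b ha hb
    constructor
    · rcases c1 with c | c <;> [left; right] <;> rw [c] <;> rfl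
    · rcases c2 with c | c <;> [left; right] <;> rw [c] <;> rfl

end Transport

end TOI

/-- For every `t ≥ 1` there is a planar graph containing a totally odd immersion of `K_t`. -/
theorem statement5 (t : ℕ) (ht : 1 ≤ t) :
    ∃ (n : ℕ) (G : SimpleGraph (Fin n)), IsPlanar G ∧ TotallyOddCliqueImmersion G t := by
  classical
  let e := Fintype.equivFin (TOI.Vt t)
  refine ⟨Fintype.card (TOI.Vt t), (TOI.G t).comap e.symm, ⟨?_, ?_⟩, ?_⟩
  · intro hsub
    exact (TOI.planar t).1 (TOI.transport_subdiv (TOI.G t) e _ hsub)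
  · intro hsub
    exact (TOI.planar t).2 (TOI.transport_subdiv (TOI.G t) e _ hsub)
  · exact TOI.transport_imm (TOI.G t) e t (TOI.immersion t)
end

section
/- Let H be a multigraph, m ≥ 2 an integer, and suppose the line graph L(H) contains a totally odd strong immersion of K_t. Then L(mH) contains a totally odd strong immersion of K_{mt}, where mH is obtained from H by replacing each edge by m parallel copies. -/
open SimpleGraph

/-- `G` contains a totally odd strong immersion of the complete graph `K t`:
pairwise edge-disjoint odd paths joining the terminals, and no terminal appears
as an interior vertex of any of the paths. -/
def TotallyOddStrongCliqueImmersion {V : Type*} (G : SimpleGraph V) (t : ℕ) : Prop :=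
  ∃ φ : Fin t ↪ V, ∃ P : (i j : Fin t) → G.Walk (φ i) (φ j),
    (∀ i j : Fin t, i < j → (P i j).IsPath) ∧
    (∀ i j : Fin t, i < j → Odd (P i j).length) ∧
    (∀ i j k : Fin t, i < j → φ k ∈ (P i j).support → k = i ∨ k = j) ∧
    (∀ i j i' j' : Fin t, i < j → i' < j' → (i, j) ≠ (i', j') →
      List.Disjoint (P i j).edges (P i' j').edges)

/-- The line graph of a multigraph given by its edge set `E` and endpoint map `ends`. -/
def multiLineGraph {V E : Type*} (ends : E → Sym2 V) : SimpleGraph E where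
  Adj e f := e ≠ f ∧ ∃ v, v ∈ ends e ∧ v ∈ ends f
  symm := ⟨by rintro e f ⟨h1, v, h2, h3⟩; exact ⟨h1.symm, v, h3, h2⟩⟩
  loopless := ⟨by rintro e ⟨h, -⟩; exact h rfl⟩


/-!
Replace each terminal `x` of the immersion in `L(H)` by its `m` copies `(x, a)`. Two copies of
the same edge of `H` are adjacent in `L(mH)`, which joins terminals over the same `x` by paths of
length one. A path `e₀, e₁, …, e_ℓ` between `x = e₀` and `y = e_ℓ` is lifted, for every pair of
labels `(a, b)`, to `(e₀, a), (e₁, b), (e₂, a), …`; as `ℓ` is odd it ends at `(y, b)`. Along a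
path every edge sits at a unique position, and the labels of its two ends there recover `(a, b)`,
so the `m²` lifts are pairwise edge-disjoint. Lifted edges join copies of distinct edges of `H`,
so they never meet the edges between copies of one edge.
-/

namespace SimpleGraph

variable {α : Type*}

def alternating (c d : α) : ℕ → α
  | 0 => c
  | n + 1 => alternating d c n

lemma alternating_eq_ite (c d : α) (n : ℕ) : alternating c d n = if Even n then c else d := by
  induction n generalizing c d with
  | zero => rfl
  | succ n ih => by_cases h : Even n <;> simp [alternating, ih, h, Nat.even_add_one]

lemma alternating_of_odd (c d : α) {n : ℕ} (hn : Odd n) : alternating c d n = d := by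
  simp [alternating_eq_ite, Nat.not_even_iff_odd.mpr hn]

variable {E : Type*} {G : SimpleGraph E} {G' : SimpleGraph (E × α)}
  (hlift : ∀ ⦃e f : E⦄, G.Adj e f → ∀ a b : α, G'.Adj (e, a) (f, b))

namespace Walk

def liftAlternating (c d : α) : ∀ {e f : E} (W : G.Walk e f),
    G'.Walk (e, c) (f, alternating c d W.length)
  | _, _, nil => nil
  | _, _, cons h W => cons (hlift h c d) (liftAlternating d c W)

variable {hlift} {e f : E} {c d c' d' : α}

@[simp]
lemma support_liftAlternating_nil :
    ((nil : G.Walk e e).liftAlternating hlift c d).support = [(e, c)] :=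
  rfl

@[simp]
lemma support_liftAlternating_cons (h : G.Adj e f) {g : E} (W : G.Walk f g) :
    ((cons h W).liftAlternating hlift c d).support =
      (e, c) :: (W.liftAlternating hlift d c).support :=
  rfl

@[simp]
lemma edges_liftAlternating_nil : ((nil : G.Walk e e).liftAlternating hlift c d).edges = [] :=
  rfl

@[simp]
lemma edges_liftAlternating_cons (h : G.Adj e f) {g : E} (W : G.Walk f g) :
    ((cons h W).liftAlternating hlift c d).edges =
      s((e, c), (f, d)) :: (W.liftAlternating hlift d c).edges :=
  rfl

@[simp]
lemma length_liftAlternating (W : G.Walk e f) :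
    (W.liftAlternating hlift c d).length = W.length := by
  induction W generalizing c d with
  | nil => rfl
  | cons h W ih => exact congrArg (· + 1) ih

@[simp]
lemma map_fst_support_liftAlternating (W : G.Walk e f) :
    (W.liftAlternating hlift c d).support.map Prod.fst = W.support := by
  induction W generalizing c d with
  | nil => rw [support_liftAlternating_nil]; rfl
  | cons h W ih => rw [support_liftAlternating_cons, List.map_cons, ih, support_cons]

@[simp]
lemma map_fst_edges_liftAlternating (W : G.Walk e f) :
    (W.liftAlternating hlift c d).edges.map (Sym2.map Prod.fst) = W.edges := by
  induction W generalizing c d with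
  | nil => rw [edges_liftAlternating_nil]; rfl
  | cons h W ih => rw [edges_liftAlternating_cons, List.map_cons, ih, edges_cons, Sym2.map_mk]

lemma fst_mem_support_of_mem_support_liftAlternating {W : G.Walk e f} {x : E × α}
    (h : x ∈ (W.liftAlternating hlift c d).support) : x.1 ∈ W.support := by
  rw [← map_fst_support_liftAlternating (hlift := hlift) (c := c) (d := d)]
  exact List.mem_map_of_mem h

lemma map_fst_mem_edges_of_mem_edges_liftAlternating {W : G.Walk e f} {s : Sym2 (E × α)}
    (h : s ∈ (W.liftAlternating hlift c d).edges) : s.map Prod.fst ∈ W.edges := by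
  rw [← map_fst_edges_liftAlternating (hlift := hlift) (c := c) (d := d)]
  exact List.mem_map_of_mem h

lemma IsPath.liftAlternating {W : G.Walk e f} (hW : W.IsPath) :
    (W.liftAlternating hlift c d).IsPath := by
  rw [isPath_def]
  exact List.Nodup.of_map Prod.fst (by simpa using hW.support_nodup)

lemma IsPath.eq_of_mem_support_liftAlternating_start {W : G.Walk e f} (hW : W.IsPath) {a : α}
    (h : (e, a) ∈ (W.liftAlternating hlift c d).support) : a = c := by
  cases W with
  | nil => rw [support_liftAlternating_nil] at h; simpa using h
  | cons hadj W =>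
    rw [support_liftAlternating_cons, List.mem_cons] at h
    rcases h with h | h
    · exact (Prod.ext_iff.mp h).2
    · exact absurd (fst_mem_support_of_mem_support_liftAlternating h)
        (cons_isPath_iff _ _ |>.mp hW).2

lemma IsPath.eq_of_mem_support_liftAlternating_end {W : G.Walk e f} (hW : W.IsPath) {a : α}
    (h : (f, a) ∈ (W.liftAlternating hlift c d).support) : a = alternating c d W.length := by
  induction W generalizing c d with
  | nil =>
    rw [support_liftAlternating_nil] at h
    exact (Prod.ext_iff.mp (List.mem_singleton.mp h)).2
  | @cons u v w hadj W ih =>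
    rw [support_liftAlternating_cons, List.mem_cons] at h
    rcases h with h | h
    · have hwu : w = u := congrArg Prod.fst h
      exact absurd (hwu ▸ W.end_mem_support) (cons_isPath_iff _ _ |>.mp hW).2
    · exact ih (cons_isPath_iff _ _ |>.mp hW).1 h

lemma IsPath.eq_or_eq_of_mem_support_liftAlternating {W : G.Walk e f} (hW : W.IsPath)
    {x : E × α} (hx : x ∈ (W.liftAlternating hlift c d).support) (hx' : x.1 = e ∨ x.1 = f) :
    x = (e, c) ∨ x = (f, alternating c d W.length) := by
  obtain ⟨y, a⟩ := x
  rcases hx' with rfl | rfl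
  · exact Or.inl (congrArg _ (hW.eq_of_mem_support_liftAlternating_start hx))
  · exact Or.inr (congrArg _ (hW.eq_of_mem_support_liftAlternating_end hx))

lemma IsPath.disjoint_edges_liftAlternating {W : G.Walk e f} (hW : W.IsPath)
    (hcd : (c, d) ≠ (c', d')) :
    (W.liftAlternating hlift c d).edges.Disjoint (W.liftAlternating hlift c' d').edges := by
  induction W generalizing c d c' d' with
  | nil => rw [edges_liftAlternating_nil]; exact List.disjoint_nil_left _
  | @cons u v w hadj W ih =>
    obtain ⟨hW, hu⟩ := (cons_isPath_iff _ _).mp hW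
    have hfirst : ∀ {a b a' b' : α}, s((u, a), (v, b)) ∉ (W.liftAlternating hlift a' b').edges :=
      fun h => hu <|
        W.fst_mem_support_of_mem_edges (map_fst_mem_edges_of_mem_edges_liftAlternating h)
    simp only [edges_liftAlternating_cons, List.disjoint_cons_left, List.disjoint_cons_right,
      List.mem_cons, not_or]
    have hne : s((u, c'), (v, d')) ≠ s((u, c), (v, d)) := by
      rw [Ne, Sym2.eq_iff]
      rintro (⟨h1, h2⟩ | ⟨h1, -⟩)
      · exact hcd (Prod.ext (congrArg Prod.snd h1).symm (congrArg Prod.snd h2).symm)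
      · exact hadj.ne (congrArg Prod.fst h1)
    exact ⟨⟨hne, hfirst⟩, hfirst, ih hW fun h => hcd (congrArg Prod.swap h)⟩

lemma disjoint_edges_liftAlternating_of_disjoint {e' f' : E} {W : G.Walk e f} {W' : G.Walk e' f'}
    (h : W.edges.Disjoint W'.edges) :
    (W.liftAlternating hlift c d).edges.Disjoint (W'.liftAlternating hlift c' d').edges :=
  fun _ hs hs' => h (map_fst_mem_edges_of_mem_edges_liftAlternating hs)
    (map_fst_mem_edges_of_mem_edges_liftAlternating hs')

lemma disjoint_edges_liftAlternating_of_ne {ι : Type*} {u : ι → E}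
    {P : ∀ i j : ι, G.Walk (u i) (u j)} {i j i' j' : ι} (hpath : (P i j).IsPath)
    (hdisj : (i, j) ≠ (i', j') → (P i j).edges.Disjoint (P i' j').edges)
    (hne : (i, j, c, d) ≠ (i', j', c', d')) :
    ((P i j).liftAlternating hlift c d).edges.Disjoint
      ((P i' j').liftAlternating hlift c' d').edges := by
  by_cases hij : (i, j) = (i', j')
  · obtain ⟨rfl, rfl⟩ := Prod.mk.inj hij
    exact hpath.disjoint_edges_liftAlternating fun hcd => hne (by rw [hcd])
  · exact disjoint_edges_liftAlternating_of_disjoint (hdisj hij)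

lemma mk_not_mem_edges_liftAlternating_of_fst_eq (W : G.Walk e f) {x y : E × α} (hxy : x.1 = y.1) :
    s(x, y) ∉ (W.liftAlternating hlift c d).edges := fun h =>
  G.not_isDiag_of_mem_edgeSet
    (W.edges_subset_edgeSet (map_fst_mem_edges_of_mem_edges_liftAlternating h))
    (Sym2.mk_isDiag_iff.mpr hxy)

end Walk
end SimpleGraph

lemma Sym2.pair_eq_of_mk_eq {ι β : Type*} [LinearOrder ι] {f : ι → β} (hf : Function.Injective f)
    {i j i' j' : ι} (h : i < j) (h' : i' < j') (hs : s(f i, f j) = s(f i', f j')) :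
    (i, j) = (i', j') := by
  rcases Sym2.eq_iff.mp hs with ⟨hi, hj⟩ | ⟨hi, hj⟩
  · rw [hf hi, hf hj]
  · exact absurd ((hf hi ▸ h).trans (hf hj ▸ h')) (lt_irrefl _)

namespace TotallyOddStrongCliqueImmersion

variable {V α : Type*} {G : SimpleGraph V} {G' : SimpleGraph (V × α)} {t n : ℕ}

lemma of_lt (φ : Fin t ↪ V) (P : ∀ i j : Fin t, i < j → G.Walk (φ i) (φ j))
    (hpath : ∀ i j h, (P i j h).IsPath) (hodd : ∀ i j h, Odd (P i j h).length)
    (hstrong : ∀ i j k h, φ k ∈ (P i j h).support → k = i ∨ k = j)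
    (hdisj : ∀ i j i' j' h h', (i, j) ≠ (i', j') → (P i j h).edges.Disjoint (P i' j' h').edges) :
    TotallyOddStrongCliqueImmersion G t := by
  refine ⟨φ, fun i j => if h : i < j then P i j h else if h' : j < i then (P j i h').reverse
    else Walk.nil.copy rfl (congrArg φ (le_antisymm (not_lt.mp h') (not_lt.mp h))),
    fun i j h => ?_, fun i j h => ?_, fun i j k h => ?_, fun i j i' j' h h' => ?_⟩
  · simpa only [dif_pos h] using hpath i j h
  · simpa only [dif_pos h] using hodd i j h
  · simpa only [dif_pos h] using hstrong i j k h
  · simpa only [dif_pos h, dif_pos h'] using hdisj i j i' j' h h'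

/-- `hlift` and `hfiber` say that `G'` contains the lexicographic product `G[K_α]`. -/
theorem blowup (hlift : ∀ ⦃e f : V⦄, G.Adj e f → ∀ a b : α, G'.Adj (e, a) (f, b))
    (hfiber : ∀ (e : V) ⦃a b : α⦄, a ≠ b → G'.Adj (e, a) (e, b))
    (h : TotallyOddStrongCliqueImmersion G t) (π : Fin n → Fin t × α) (hπ : Function.Injective π)
    (hmono : Monotone fun I => (π I).1) :
    TotallyOddStrongCliqueImmersion G' n := by
  obtain ⟨φ, P, hpath, hodd, hstrong, hdisj⟩ := h
  let ψ : Fin n ↪ V × α := (⟨π, hπ⟩ : Fin n ↪ Fin t × α).trans (φ.prodMap (.refl α))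
  have hψ (I : Fin n) : ψ I = (φ (π I).1, (π I).2) := rfl
  have hfst (I J : Fin n) (h : I < J) (h' : ¬ (π I).1 < (π J).1) : (π I).1 = (π J).1 :=
    (hmono h.le).eq_of_not_lt h'
  have hfiber_adj (I J : Fin n) (h : I < J) (h' : ¬ (π I).1 < (π J).1) : G'.Adj (ψ I) (ψ J) := by
    have hsnd : (π I).2 ≠ (π J).2 := fun hsnd => h.ne (hπ (Prod.ext (hfst I J h h') hsnd))
    rw [hψ, hψ, hfst I J h h']
    exact hfiber _ hsnd
  let Q (I J : Fin n) (h : I < J) : G'.Walk (ψ I) (ψ J) :=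
    if h' : (π I).1 < (π J).1 then
      ((P _ _).liftAlternating hlift (π I).2 (π J).2).copy (hψ I).symm
        (by rw [alternating_of_odd _ _ (hodd _ _ h'), hψ])
    else (hfiber_adj I J h h').toWalk
  refine of_lt ψ Q (fun I J h => ?_) (fun I J h => ?_) (fun I J K h hK => ?_)
    (fun I J I' J' h h₂ hne => ?_)
  · by_cases h' : (π I).1 < (π J).1
    · simpa only [Q, dif_pos h', Walk.isPath_copy] using (hpath _ _ h').liftAlternating
    · simpa only [Q, dif_neg h'] using (hfiber_adj I J h h').isPath_toWalk
  · by_cases h' : (π I).1 < (π J).1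
    · simpa only [Q, dif_pos h', Walk.length_copy, Walk.length_liftAlternating] using hodd _ _ h'
    · simp only [Q, dif_neg h', Adj.length_toWalk, odd_one]
  · by_cases h' : (π I).1 < (π J).1
    · simp only [Q, dif_pos h', Walk.support_copy] at hK
      have hterminal := hstrong _ _ _ h' (Walk.fst_mem_support_of_mem_support_liftAlternating hK)
      have hK' := (hpath _ _ h').eq_or_eq_of_mem_support_liftAlternating hK
        (hterminal.imp (congrArg φ) (congrArg φ))
      rw [alternating_of_odd _ _ (hodd _ _ h')] at hK'
      exact hK'.imp (ψ.injective ·) (ψ.injective ·)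
    · simp only [Q, dif_neg h', Adj.support_toWalk, List.mem_cons, List.not_mem_nil, or_false] at hK
      exact hK.imp (ψ.injective ·) (ψ.injective ·)
  · by_cases h' : (π I).1 < (π J).1 <;> by_cases h₂' : (π I').1 < (π J').1 <;>
      simp only [Q, dif_pos, dif_neg, h', h₂', not_false_eq_true, Walk.edges_copy, Adj.edges_toWalk,
        List.disjoint_singleton, List.singleton_disjoint, List.mem_singleton]
    · refine Walk.disjoint_edges_liftAlternating_of_ne (hpath _ _ h') (hdisj _ _ _ _ h' h₂')
        fun hxy => hne ?_
      simp only [Prod.mk.injEq] at hxy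
      rw [hπ (Prod.ext hxy.1 hxy.2.2.1), hπ (Prod.ext hxy.2.1 hxy.2.2.2)]
    · exact Walk.mk_not_mem_edges_liftAlternating_of_fst_eq _ (congrArg φ (hfst I' J' h₂ h₂'))
    · exact Walk.mk_not_mem_edges_liftAlternating_of_fst_eq _ (congrArg φ (hfst I J h h'))
    · exact fun hs => hne (Sym2.pair_eq_of_mk_eq ψ.injective h h₂ hs.symm)

end TotallyOddStrongCliqueImmersion

section multiLineGraph

variable {V E α : Type*} {ends : E → Sym2 V}

lemma multiLineGraph_adj_prod_mk_of_adj {e f : E} (h : (multiLineGraph ends).Adj e f) (a b : α) :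
    (multiLineGraph fun p : E × α => ends p.1).Adj (e, a) (f, b) :=
  ⟨fun hef => h.1 (congrArg Prod.fst hef), h.2⟩

lemma multiLineGraph_adj_prod_mk_of_ne (e : E) {a b : α} (h : a ≠ b) :
    (multiLineGraph fun p : E × α => ends p.1).Adj (e, a) (e, b) :=
  ⟨fun hab => h (congrArg Prod.snd hab), _, (ends e).out_fst_mem, (ends e).out_fst_mem⟩

end multiLineGraph

theorem statement7_general {V E : Type*} (ends : E → Sym2 V) (t m : ℕ)
    (h : TotallyOddStrongCliqueImmersion (multiLineGraph ends) t) :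
    TotallyOddStrongCliqueImmersion
      (multiLineGraph (fun p : E × Fin m => ends p.1)) (m * t) := by
  refine h.blowup (fun _ _ hef => multiLineGraph_adj_prod_mk_of_adj hef)
    multiLineGraph_adj_prod_mk_of_ne
    (finProdFinEquiv.symm ∘ finCongr (mul_comm m t))
    (finProdFinEquiv.symm.injective.comp (finCongr _).injective) fun I J hIJ => ?_
  simpa [finProdFinEquiv, Fin.le_def] using Nat.div_le_div_right (c := m) hIJ

/-- If the line graph of a multigraph `H` contains a totally odd strong immersion of `K_t`
and `m ≥ 2`, then the line graph of `mH` contains a totally odd strong immersion of `K_{mt}`. -/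
theorem statement7 {V E : Type*} (ends : E → Sym2 V)
    (hloopless : ∀ e, ¬ (ends e).IsDiag) (t m : ℕ) (hm : 2 ≤ m)
    (h : TotallyOddStrongCliqueImmersion (multiLineGraph ends) t) :
    TotallyOddStrongCliqueImmersion
      (multiLineGraph (fun p : E × Fin m => ends p.1)) (m * t) :=
  statement7_general ends t m h
end

section
/- If H is an edge-critical simple graph with maximum degree d ≥ 2, then the subgraph of H induced by the vertices of degree d contains a cycle. -/
open SimpleGraph

def EdgeColorable {V : Type*} (G : SimpleGraph V) (n : ℕ) : Prop :=
  ∃ c : G.edgeSet → Fin n, ∀ e f : G.edgeSet, e ≠ f →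
    (∃ v, v ∈ (e : Sym2 V) ∧ v ∈ (f : Sym2 V)) → c e ≠ c f

namespace VizingAux
variable {V : Type*}

def Proper {d : ℕ} (f : Sym2 V → Option (Fin d)) : Prop :=
  ∀ u v w : V, v ≠ w → f s(u,v) = f s(u,w) → f s(u,v) = none

def Dom (H : SimpleGraph V) {d : ℕ} (f : Sym2 V → Option (Fin d)) : Prop :=
  ∀ e, f e ≠ none → e ∈ H.edgeSet

def Hole (H : SimpleGraph V) {d : ℕ} (f : Sym2 V → Option (Fin d)) (e₀ : Sym2 V) : Prop :=
  f e₀ = none ∧ ∀ e ∈ H.edgeSet, e ≠ e₀ → f e ≠ none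

def Present {d : ℕ} (f : Sym2 V → Option (Fin d)) (v : V) (γ : Fin d) : Prop :=
  ∃ w, f s(v,w) = some γ

variable {H : SimpleGraph V} {d : ℕ} {f : Sym2 V → Option (Fin d)}

lemma proper_symm {γ : Fin d} (hf : Proper f) {u v w : V} (hvw : v ≠ w)
    (h1 : f s(u,v) = some γ) (h2 : f s(u,w) = some γ) : False := by
  have := hf u v w hvw (h1.trans h2.symm)
  rw [h1] at this; exact Option.some_ne_none _ this

lemma sym2_ne {u v w : V} (hvw : v ≠ w) : s(u,v) ≠ s(u,w) := by
  intro h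
  rcases Sym2.eq_iff.mp h with ⟨_, h⟩ | ⟨h1, h2⟩
  · exact hvw h
  · exact hvw (h2.trans h1)

/-- A total proper coloring gives `EdgeColorable H d`. -/
lemma edgeColorable_of_total (hf : Proper f) (htot : ∀ e ∈ H.edgeSet, f e ≠ none) :
    EdgeColorable H d := by
  classical
  have hsome : ∀ e : H.edgeSet, ∃ γ, f e.1 = some γ := by
    intro e
    rcases Option.ne_none_iff_exists.mp (htot e.1 e.2) with ⟨γ, hγ⟩
    exact ⟨γ, hγ.symm⟩
  refine ⟨fun e => Classical.choose (hsome e), ?_⟩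
  rintro ⟨e, he⟩ ⟨e', he'⟩ hne ⟨v, hv, hv'⟩ hc
  obtain ⟨a, rfl⟩ := Sym2.mem_iff_exists.mp hv
  obtain ⟨b, rfl⟩ := Sym2.mem_iff_exists.mp hv'
  have hab : a ≠ b := fun h => hne (by subst h; rfl)
  have h1 := Classical.choose_spec (hsome ⟨s(v,a), he⟩)
  have h2 := Classical.choose_spec (hsome ⟨s(v,b), he'⟩)
  simp only at hc
  rw [← hc] at h2
  exact proper_symm hf hab h1 h2

/-- From colorability of `H` minus an edge, get a proper coloring with a hole. -/
lemma exists_hole_coloring (e₀ : Sym2 V) (h : EdgeColorable (H.deleteEdges {e₀}) d) :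
    ∃ f : Sym2 V → Option (Fin d), Proper f ∧ Dom H f ∧ Hole H f e₀ := by
  classical
  obtain ⟨c, hc⟩ := h
  refine ⟨fun e => if h : e ∈ (H.deleteEdges {e₀}).edgeSet then some (c ⟨e, h⟩) else none,
    ?_, ?_, ?_, ?_⟩
  · intro u v w hvw heq
    simp only at heq ⊢
    by_cases h1 : s(u,v) ∈ (H.deleteEdges {e₀}).edgeSet
    · by_cases h2 : s(u,w) ∈ (H.deleteEdges {e₀}).edgeSet
      · exfalso
        rw [dif_pos h1, dif_pos h2] at heq
        refine hc ⟨_, h1⟩ ⟨_, h2⟩ (fun hh => sym2_ne hvw (congrArg Subtype.val hh))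
          ⟨u, by simp, by simp⟩ (Option.some_injective _ heq)
      · rw [dif_neg h2] at heq; rw [heq]
    · exact dif_neg h1
  · intro e he
    simp only at he
    by_cases h1 : e ∈ (H.deleteEdges {e₀}).edgeSet
    · rw [edgeSet_deleteEdges] at h1; exact h1.1
    · rw [dif_neg h1] at he; simp at he
  · simp only
    rw [dif_neg]; rw [edgeSet_deleteEdges]; simp
  · intro e he hne
    simp only
    rw [dif_pos (by rw [edgeSet_deleteEdges]; exact ⟨he, hne⟩)]
    simp


lemma sym2_congr {u v w : V} (h : s(u,v) = s(u,w)) : v = w := by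
  rcases Sym2.eq_iff.mp h with ⟨_, h⟩ | ⟨h1, h2⟩
  · exact h
  · exact h2.trans h1

lemma exists_missing [Fintype V] {v : V}
    (h : (Finset.univ.filter fun w => f s(v,w) ≠ none).card < d) :
    ∃ γ, ¬ Present f v γ := by
  classical
  by_contra hall
  push_neg at hall
  have hg : ∀ γ : Fin d, ∃ w, f s(v,w) = some γ := hall
  have hinj : ∀ γ ∈ (Finset.univ : Finset (Fin d)), ∀ γ' ∈ (Finset.univ : Finset (Fin d)),
      Classical.choose (hg γ) = Classical.choose (hg γ') → γ = γ' := by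
    intro γ _ γ' _ heq
    have h1 := Classical.choose_spec (hg γ)
    have h2 := Classical.choose_spec (hg γ')
    rw [heq] at h1
    exact Option.some_injective _ (h1.symm.trans h2)
  have hmem : ∀ γ ∈ (Finset.univ : Finset (Fin d)),
      Classical.choose (hg γ) ∈ Finset.univ.filter fun w => f s(v,w) ≠ none := by
    intro γ _
    simp only [Finset.mem_filter, Finset.mem_univ, true_and]
    rw [Classical.choose_spec (hg γ)]
    exact Option.some_ne_none _
  have := Finset.card_le_card_of_injOn _ hmem hinj
  simp only [Finset.card_univ, Fintype.card_fin] at this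
  omega

lemma colored_card_lt_degree [Fintype V] [DecidableRel H.Adj] (hdom : Dom H f) {v u : V}
    (hadj : H.Adj v u) (hnone : f s(v,u) = none) :
    (Finset.univ.filter fun w => f s(v,w) ≠ none).card < H.degree v := by
  classical
  rw [← card_neighborFinset_eq_degree]
  apply Finset.card_lt_card
  constructor
  · intro w hw
    simp only [Finset.mem_filter, Finset.mem_univ, true_and] at hw
    rw [mem_neighborFinset]
    exact (H.mem_edgeSet).mp (hdom _ hw)
  · intro hsub
    have := hsub ((mem_neighborFinset H v u).mpr hadj)
    simp only [Finset.mem_filter] at this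
    exact this.2 hnone

/-- Extension of a coloring with a hole, when a common color is missing at both endpoints:
contradiction with non-colorability. -/
lemma no_extension (hlb : ¬ EdgeColorable H d) (hf : Proper f) (hdom : Dom H f) {x y : V}
    (hhole : Hole H f s(x,y)) (hxy : s(x,y) ∈ H.edgeSet) {γ : Fin d}
    (hx : ¬ Present f x γ) (hy : ¬ Present f y γ) : False := by
  classical
  set f' : Sym2 V → Option (Fin d) := fun e => if e = s(x,y) then some γ else f e with hf'def
  have hval : ∀ e, f' e = if e = s(x,y) then some γ else f e := fun e => rfl
  apply hlb
  have hprop : Proper f' := by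
    intro u v w hvw heq
    rw [hval, hval] at heq
    rw [hval]
    by_cases h1 : s(u,v) = s(x,y) <;> by_cases h2 : s(u,w) = s(x,y)
    · exact absurd (sym2_congr (h1.trans h2.symm)) hvw
    · exfalso
      rw [if_pos h1, if_neg h2] at heq
      rcases Sym2.eq_iff.mp h1 with ⟨hu, hv⟩ | ⟨hu, hv⟩
      · exact hx ⟨w, by rw [← hu]; exact heq.symm⟩
      · exact hy ⟨w, by rw [← hu]; exact heq.symm⟩
    · exfalso
      rw [if_neg h1, if_pos h2] at heq
      rcases Sym2.eq_iff.mp h2 with ⟨hu, hv⟩ | ⟨hu, hv⟩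
      · exact hx ⟨v, by rw [← hu]; exact heq⟩
      · exact hy ⟨v, by rw [← hu]; exact heq⟩
    · rw [if_neg h1, if_neg h2] at heq
      rw [if_neg h1]
      exact hf u v w hvw heq
  apply edgeColorable_of_total hprop
  intro e he
  rw [hval]
  by_cases h : e = s(x,y)
  · rw [if_pos h]; exact Option.some_ne_none _
  · rw [if_neg h]; exact hhole.2 e he h

/-- Move the hole from `s(y,a)` to `s(y,b)` where `s(y,b)` has a color `γ` missing at `a`. -/
lemma hole_move (hf : Proper f) (hdom : Dom H f) {y a b : V} {γ : Fin d}
    (hhole : Hole H f s(y,a)) (hya : s(y,a) ∈ H.edgeSet)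
    (hb : f s(y,b) = some γ) (hγa : ¬ Present f a γ) :
    ∃ f' : Sym2 V → Option (Fin d), Proper f' ∧ Dom H f' ∧ Hole H f' s(y,b) ∧
      f' s(y,a) = some γ ∧
      (∀ e, y ∉ e → f' e = f e) ∧
      (∀ z, z ≠ a → z ≠ b → f' s(y,z) = f s(y,z)) ∧
      (∀ δ, Present f' y δ ↔ Present f y δ) := by
  classical
  have hab : a ≠ b := by
    intro h
    have h1 := hhole.1
    rw [h, hb] at h1
    exact Option.some_ne_none _ h1
  have hkey : s(y,a) ≠ s(y,b) := fun h => hab (sym2_congr h)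
  set f' : Sym2 V → Option (Fin d) :=
    fun e => if e = s(y,a) then some γ else if e = s(y,b) then none else f e with hf'def
  have hval : ∀ e, f' e = if e = s(y,a) then some γ else if e = s(y,b) then none else f e :=
    fun e => rfl
  have key_case : ∀ u v w : V, s(u,v) = s(y,a) → s(u,w) ≠ s(y,a) →
      f' s(u,w) = some γ → False := by
    intro u v w h1 h2 hw
    rw [hval, if_neg h2] at hw
    by_cases h3 : s(u,w) = s(y,b)
    · rw [if_pos h3] at hw; exact (nomatch hw)
    rw [if_neg h3] at hw
    rcases Sym2.eq_iff.mp h1 with ⟨hu, hv⟩ | ⟨hu, hv⟩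
    · -- u = y, v = a : two γ edges at y : s(y,w) and s(y,b)
      subst hu
      have hwb : w ≠ b := fun h => h3 (by rw [h])
      exact proper_symm hf hwb hw hb
    · -- u = a, v = y : γ present at a
      subst hu
      exact hγa ⟨w, hw⟩
  refine ⟨f', ?_, ?_, ?_, ?_, ?_, ?_, ?_⟩
  · -- Proper
    intro u v w hvw heq
    rw [hval s(u,v), hval s(u,w)] at heq
    rw [hval]
    by_cases h1 : s(u,v) = s(y,a) <;> by_cases h2 : s(u,w) = s(y,a)
    · exact absurd (sym2_congr (h1.trans h2.symm)) hvw
    · exfalso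
      rw [if_pos h1, if_neg h2] at heq
      refine key_case u v w h1 h2 ?_
      rw [hval, if_neg h2]
      exact heq.symm
    · exfalso
      rw [if_pos h2, if_neg h1] at heq
      refine key_case u w v h2 h1 ?_
      rw [hval, if_neg h1]
      exact heq
    · rw [if_neg h1] at heq ⊢
      rw [if_neg h2] at heq
      by_cases h3 : s(u,v) = s(y,b)
      · rw [if_pos h3]
      · rw [if_neg h3] at heq ⊢
        by_cases h4 : s(u,w) = s(y,b)
        · rw [if_pos h4] at heq; exact heq
        · rw [if_neg h4] at heq
          exact hf u v w hvw heq
  · -- Dom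
    intro e he
    rw [hval] at he
    by_cases h1 : e = s(y,a)
    · rw [h1]; exact hya
    · rw [if_neg h1] at he
      by_cases h2 : e = s(y,b)
      · rw [if_pos h2] at he; exact absurd rfl he
      · rw [if_neg h2] at he; exact hdom e he
  · -- Hole at s(y,b)
    constructor
    · rw [hval, if_neg (Ne.symm hkey), if_pos rfl]
    · intro e he hne
      rw [hval]
      by_cases h1 : e = s(y,a)
      · rw [if_pos h1]; exact Option.some_ne_none _
      · rw [if_neg h1, if_neg hne]
        exact hhole.2 e he h1
  · rw [hval, if_pos rfl]
  · -- untouched away from y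
    intro e hye
    rw [hval]
    rw [if_neg (fun h => hye (by rw [h]; exact Sym2.mem_mk_left y a)),
      if_neg (fun h => hye (by rw [h]; exact Sym2.mem_mk_left y b))]
  · -- untouched at other y edges
    intro z hza hzb
    rw [hval]
    rw [if_neg (fun h => hza (sym2_congr h)), if_neg (fun h => hzb (sym2_congr h))]
  · -- presents at y
    intro δ
    constructor
    · rintro ⟨w, hw⟩
      rw [hval] at hw
      by_cases h1 : s(y,w) = s(y,a)
      · rw [if_pos h1] at hw
        exact ⟨b, by rw [hb, ← hw]⟩
      · rw [if_neg h1] at hw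
        by_cases h2 : s(y,w) = s(y,b)
        · rw [if_pos h2] at hw; exact (nomatch hw)
        · rw [if_neg h2] at hw; exact ⟨w, hw⟩
    · rintro ⟨w, hw⟩
      by_cases h1 : w = a
      · rw [h1, hhole.1] at hw; exact (nomatch hw)
      · by_cases h2 : w = b
        · refine ⟨a, ?_⟩
          rw [hval, if_pos rfl]
          rw [h2, hb] at hw
          exact hw
        · refine ⟨w, ?_⟩
          rw [hval, if_neg (fun h => h1 (sym2_congr h)), if_neg (fun h => h2 (sym2_congr h))]
          exact hw


/-- Rotating a fan: moving the hole from `s(y, xs 0)` to `s(y, xs l)`. -/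
lemma rotate {y : V} {k : ℕ} (xs : ℕ → V) (as : ℕ → Fin d)
    (hf : Proper f) (hdom : Dom H f)
    (hadj : ∀ m, m ≤ k → H.Adj y (xs m))
    (hinj : ∀ m, m ≤ k → ∀ m', m' ≤ k → xs m = xs m' → m = m')
    (hmiss : ∀ m, m ≤ k → ¬ Present f (xs m) (as m))
    (hcol : ∀ m, m < k → f s(y, xs (m+1)) = some (as m))
    (hhole : Hole H f s(y, xs 0)) :
    ∀ l, l ≤ k →
    ∃ f' : Sym2 V → Option (Fin d), Proper f' ∧ Dom H f' ∧ Hole H f' s(y, xs l) ∧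
      (∀ e, y ∉ e → f' e = f e) ∧
      (∀ m, m < l → f' s(y, xs m) = some (as m)) ∧
      (∀ z, z ≠ y → (∀ m, m ≤ l → z ≠ xs m) → f' s(y,z) = f s(y,z)) ∧
      (∀ δ, Present f' y δ ↔ Present f y δ) := by
  intro l
  induction l with
  | zero =>
    intro _
    exact ⟨f, hf, hdom, hhole, fun _ _ => rfl, fun m hm => absurd hm (Nat.not_lt_zero m),
      fun _ _ _ => rfl, fun _ => Iff.rfl⟩
  | succ l ih =>
    intro hlk
    obtain ⟨f', hf', hdom', hhole', hoffy, hfan, hother, hpres⟩ := ih (le_of_lt hlk)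
    have hlk' : l < k := hlk
    -- the edge s(y, xs (l+1)) still has its original color in f'
    have hb : f' s(y, xs (l+1)) = some (as l) := by
      rw [hother (xs (l+1)) (H.adj_symm (hadj (l+1) hlk)).ne ?_]
      · exact hcol l hlk'
      · intro m hm heq
        have := hinj (l+1) hlk m (le_trans hm (le_of_lt hlk)) heq
        omega
    -- as l is still missing at xs l w.r.t. f'
    have hmiss' : ¬ Present f' (xs l) (as l) := by
      rintro ⟨w, hw⟩
      by_cases hwy : w = y
      · rw [hwy, Sym2.eq_swap, hhole'.1] at hw
        exact (nomatch hw)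
      · rw [hoffy s(xs l, w) ?_] at hw
        · exact hmiss l (le_of_lt hlk') ⟨w, hw⟩
        · intro hy
          rcases Sym2.mem_iff.mp hy with h | h
          · exact (hadj l (le_of_lt hlk')).ne' h.symm
          · exact hwy h.symm
    obtain ⟨f'', ppf, ppdom, pphole, ppval, ppoffy, ppother, pppres⟩ :=
      hole_move hf' hdom' hhole' ((H.mem_edgeSet).mpr (hadj l (le_of_lt hlk'))) hb hmiss'
    refine ⟨f'', ppf, ppdom, pphole, ?_, ?_, ?_, ?_⟩
    · intro e hye
      rw [ppoffy e hye, hoffy e hye]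
    · intro m hm
      by_cases hml : m = l
      · rw [hml]; exact ppval
      · have hm' : m < l := by omega
        rw [ppother (xs m) ?_ ?_]
        · exact hfan m hm'
        · intro h
          have := hinj m (by omega) l (by omega) h
          omega
        · intro h
          have := hinj m (by omega) (l+1) hlk h
          omega
    · intro z hzy hzm
      rw [ppother z (hzm l (by omega)) (hzm (l+1) (by omega)),
        hother z hzy (fun m hm => hzm m (by omega))]
    · intro δ
      rw [pppres δ, hpres δ]


/-- The graph of edges colored `α` or `β`. -/
def kempe {d : ℕ} (f : Sym2 V → Option (Fin d)) (α β : Fin d) : SimpleGraph V where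
  Adj u v := u ≠ v ∧ (f s(u,v) = some α ∨ f s(u,v) = some β)
  symm := by
    constructor
    intro u v ⟨h1, h2⟩
    refine ⟨h1.symm, ?_⟩
    rwa [Sym2.eq_swap]
  loopless := ⟨fun u h => h.1 rfl⟩

lemma kempe_adj (hdom : Dom H f) {α β : Fin d} {u v : V}
    (h : f s(u,v) = some α ∨ f s(u,v) = some β) : (kempe f α β).Adj u v := by
  refine ⟨?_, h⟩
  have : s(u,v) ∈ H.edgeSet := by
    apply hdom
    rcases h with h | h <;> rw [h] <;> exact Option.some_ne_none _
  exact ((H.mem_edgeSet).mp this).ne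

/-- Swapping the two colors on the Kempe component of `x₀`. -/
lemma kempe_swap (hf : Proper f) (hdom : Dom H f) {α β : Fin d} (hαβ : α ≠ β) (x₀ : V) :
    ∃ f' : Sym2 V → Option (Fin d), Proper f' ∧ Dom H f' ∧
      (∀ e, f' e = none ↔ f e = none) ∧
      (∀ v, (kempe f α β).Reachable x₀ v →
        ((Present f' v α ↔ Present f v β) ∧ (Present f' v β ↔ Present f v α))) ∧
      (∀ v, ¬ (kempe f α β).Reachable x₀ v →
        ((Present f' v α ↔ Present f v α) ∧ (Present f' v β ↔ Present f v β))) := by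
  classical
  set K := kempe f α β with hK
  set f' : Sym2 V → Option (Fin d) := fun e =>
    if (f e = some α ∨ f e = some β) ∧ (∃ u ∈ e, K.Reachable x₀ u) then
      (if f e = some α then some β else some α) else f e with hf'def
  have hval0 : ∀ e, f' e =
      if (f e = some α ∨ f e = some β) ∧ (∃ u ∈ e, K.Reachable x₀ u) then
        (if f e = some α then some β else some α) else f e := fun e => rfl
  have hmemR : ∀ u v : V, (f s(u,v) = some α ∨ f s(u,v) = some β) →
      ((∃ w ∈ s(u,v), K.Reachable x₀ w) ↔ K.Reachable x₀ u) := by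
    intro u v hc
    constructor
    · rintro ⟨w, hw, hR⟩
      rcases Sym2.mem_iff.mp hw with rfl | rfl
      · exact hR
      · exact hR.trans (K.adj_symm (kempe_adj hdom hc)).reachable
    · intro hR
      exact ⟨u, Sym2.mem_mk_left u v, hR⟩
  have hval1 : ∀ u v, (f s(u,v) = some α ∨ f s(u,v) = some β) → K.Reachable x₀ u →
      f' s(u,v) = (if f s(u,v) = some α then some β else some α) := by
    intro u v hc hR
    rw [hval0, if_pos ⟨hc, (hmemR u v hc).mpr hR⟩]
  have hval2 : ∀ u v, (f s(u,v) = some α ∨ f s(u,v) = some β) → ¬ K.Reachable x₀ u →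
      f' s(u,v) = f s(u,v) := by
    intro u v hc hR
    rw [hval0, if_neg (fun hh => hR ((hmemR u v hc).mp hh.2))]
  have hval3 : ∀ e, ¬(f e = some α ∨ f e = some β) → f' e = f e := by
    intro e hc
    rw [hval0, if_neg (fun hh => hc hh.1)]
  have huns : ∀ u v, ¬ K.Reachable x₀ u → f' s(u,v) = f s(u,v) := by
    intro u v hR
    by_cases hc : (f s(u,v) = some α ∨ f s(u,v) = some β)
    · exact hval2 u v hc hR
    · exact hval3 _ hc
  refine ⟨f', ?_, ?_, ?_, ?_, ?_⟩
  · -- Proper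
    intro u v w hvw heq
    by_cases Ru : K.Reachable x₀ u
    · by_cases c1 : (f s(u,v) = some α ∨ f s(u,v) = some β) <;>
        by_cases c2 : (f s(u,w) = some α ∨ f s(u,w) = some β)
      · exfalso
        rw [hval1 u v c1 Ru, hval1 u w c2 Ru] at heq
        have hsame : f s(u,v) = f s(u,w) := by
          by_cases d1 : f s(u,v) = some α <;> by_cases d2 : f s(u,w) = some α
          · exact d1.trans d2.symm
          · rw [if_pos d1, if_neg d2] at heq
            exact absurd (Option.some_injective _ heq).symm hαβ
          · rw [if_neg d1, if_pos d2] at heq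
            exact absurd (Option.some_injective _ heq) hαβ
          · have e1 : f s(u,v) = some β := c1.resolve_left d1
            have e2 : f s(u,w) = some β := c2.resolve_left d2
            exact e1.trans e2.symm
        have := hf u v w hvw hsame
        rcases c1 with c1 | c1 <;> rw [c1] at this <;> exact (nomatch this)
      · exfalso
        rw [hval1 u v c1 Ru, hval3 _ c2] at heq
        by_cases d1 : f s(u,v) = some α
        · rw [if_pos d1] at heq; exact c2 (Or.inr heq.symm)
        · rw [if_neg d1] at heq; exact c2 (Or.inl heq.symm)
      · exfalso
        rw [hval3 _ c1, hval1 u w c2 Ru] at heq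
        by_cases d2 : f s(u,w) = some α
        · rw [if_pos d2] at heq; exact c1 (Or.inr heq)
        · rw [if_neg d2] at heq; exact c1 (Or.inl heq)
      · rw [hval3 _ c1, hval3 _ c2] at heq
        rw [hval3 _ c1]
        exact hf u v w hvw heq
    · rw [huns u v Ru, huns u w Ru] at heq
      rw [huns u v Ru]
      exact hf u v w hvw heq
  · -- Dom
    intro e he
    apply hdom
    rw [hval0] at he
    by_cases hc : (f e = some α ∨ f e = some β) ∧ (∃ u ∈ e, K.Reachable x₀ u)
    · rcases hc.1 with h | h <;> rw [h] <;> exact Option.some_ne_none _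
    · rwa [if_neg hc] at he
  · -- none iff
    intro e
    rw [hval0]
    by_cases hc : (f e = some α ∨ f e = some β) ∧ (∃ u ∈ e, K.Reachable x₀ u)
    · rw [if_pos hc]
      constructor
      · intro h
        by_cases d : f e = some α
        · rw [if_pos d] at h; exact (nomatch h)
        · rw [if_neg d] at h; exact (nomatch h)
      · intro h
        rcases hc.1 with h' | h' <;> rw [h'] at h <;> exact (nomatch h)
    · rw [if_neg hc]
  · -- presents at reachable vertices
    intro v Rv
    constructor
    · constructor
      · rintro ⟨w, hw⟩
        by_cases hc : (f s(v,w) = some α ∨ f s(v,w) = some β)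
        · rw [hval1 v w hc Rv] at hw
          by_cases d : f s(v,w) = some α
          · rw [if_pos d] at hw
            exact absurd (Option.some_injective _ hw).symm hαβ
          · exact ⟨w, hc.resolve_left d⟩
        · rw [hval3 _ hc] at hw
          exact absurd (Or.inl hw) hc
      · rintro ⟨w, hw⟩
        refine ⟨w, ?_⟩
        rw [hval1 v w (Or.inr hw) Rv, if_neg (fun h => hαβ (Option.some_injective _ (h.symm.trans hw)))]
    · constructor
      · rintro ⟨w, hw⟩
        by_cases hc : (f s(v,w) = some α ∨ f s(v,w) = some β)
        · rw [hval1 v w hc Rv] at hw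
          by_cases d : f s(v,w) = some α
          · exact ⟨w, d⟩
          · rw [if_neg d] at hw
            exact absurd (Option.some_injective _ hw) hαβ
        · rw [hval3 _ hc] at hw
          exact absurd (Or.inr hw) hc
      · rintro ⟨w, hw⟩
        refine ⟨w, ?_⟩
        rw [hval1 v w (Or.inl hw) Rv, if_pos hw]
  · -- presents at unreachable vertices
    intro v Rv
    constructor
    · constructor
      · rintro ⟨w, hw⟩
        rw [huns v w Rv] at hw
        exact ⟨w, hw⟩
      · rintro ⟨w, hw⟩
        exact ⟨w, by rw [huns v w Rv]; exact hw⟩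
    · constructor
      · rintro ⟨w, hw⟩
        rw [huns v w Rv] at hw
        exact ⟨w, hw⟩
      · rintro ⟨w, hw⟩
        exact ⟨w, by rw [huns v w Rv]; exact hw⟩

/-- The forced Kempe chain: endpoints of the hole with distinct missing colors are joined. -/
lemma kempe_reach (hlb : ¬ EdgeColorable H d) (hf : Proper f) (hdom : Dom H f) {p q : V}
    (hhole : Hole H f s(p,q)) (hpq : s(p,q) ∈ H.edgeSet) {α β : Fin d} (hαβ : α ≠ β)
    (hp : ¬ Present f p α) (hq : ¬ Present f q β) : (kempe f α β).Reachable p q := by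
  by_contra hR
  obtain ⟨f', hf', hdom', hnone, hreach, hunreach⟩ := kempe_swap hf hdom hαβ p
  have hhole' : Hole H f' s(p,q) := by
    refine ⟨(hnone _).mpr hhole.1, fun e he hne h => hhole.2 e he hne ((hnone e).mp h)⟩
  refine no_extension hlb hf' hdom' hhole' hpq (γ := β) ?_ ?_
  · intro h
    exact hp (((hreach p (Reachable.refl p)).2).mp h)
  · intro h
    exact hq (((hunreach q hR).2).mp h)


section PureGraph
variable {W : Type*} {G D : SimpleGraph W}

/-- Walking to `a` whose only neighbor is `b` forces reaching `b` through `D`. -/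
lemma reach_avoid {a b : W}
    (hab : ∀ u, G.Adj a u → u = b)
    (hD : ∀ u v, G.Adj u v → u ≠ a → v ≠ a → D.Adj u v) :
    ∀ {u y}, (p : G.Walk u y) → y = a → u ≠ a → D.Reachable u b := by
  intro u y p
  induction p with
  | nil => exact fun hy hu => absurd hy hu
  | @cons x v y' h q ih =>
    intro hy hu
    by_cases hv : v = a
    · have hx : x = b := hab x (G.adj_symm (hv ▸ h))
      rw [hx]
    · exact ((hD x v h hu hv).reachable).trans (ih hy hv)

lemma reach_closed {S : Set W} (hS : ∀ a ∈ S, ∀ b, G.Adj a b → b ∈ S) :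
    ∀ {x y : W}, G.Reachable x y → x ∈ S → y ∈ S := by
  intro x y ⟨p⟩
  induction p with
  | nil => exact id
  | @cons u v _ h q ih => exact fun hx => ih (hS u hx v h)

lemma adj_tail_of_ne {x y : W} (p : G.Walk x y) (hxy : x ≠ y) :
    ∃ z, G.Adj x z ∧ z ∈ p.support.tail := by
  cases p with
  | nil => exact absurd rfl hxy
  | cons h q => exact ⟨_, h, by simp⟩

/-- In a graph of maximum degree ≤ 2, there cannot be three distinct pairwise-reachable
vertices each of degree ≤ 1. -/
lemma three_endpoints {u v w : W}
    (huv : u ≠ v) (huw : u ≠ w) (hvw : v ≠ w)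
    (hu : ∀ n1 n2, G.Adj u n1 → G.Adj u n2 → n1 = n2)
    (hv : ∀ n1 n2, G.Adj v n1 → G.Adj v n2 → n1 = n2)
    (hw : ∀ n1 n2, G.Adj w n1 → G.Adj w n2 → n1 = n2)
    (hmax : ∀ z n1 n2 n3, G.Adj z n1 → G.Adj z n2 → G.Adj z n3 →
      n1 = n2 ∨ n1 = n3 ∨ n2 = n3)
    (h1 : G.Reachable u v) (h2 : G.Reachable u w) : False := by
  classical
  obtain ⟨q⟩ := h1
  set p := q.bypass with hp
  have hpath : p.IsPath := q.bypass_isPath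
  have hnodup := (SimpleGraph.Walk.isPath_def p).mp hpath
  have hclosed : ∀ a ∈ {z | z ∈ p.support}, ∀ b, G.Adj a b → b ∈ {z | z ∈ p.support} := by
    intro a ha b hb
    simp only [Set.mem_setOf_eq] at ha ⊢
    by_cases hau : a = u
    · subst hau
      obtain ⟨z, hz1, hz2⟩ := adj_tail_of_ne p huv
      rw [hu b z hb hz1]
      exact List.mem_of_mem_tail hz2
    · by_cases hav : a = v
      · subst hav
        obtain ⟨z, hz1, hz2⟩ := adj_tail_of_ne p.reverse huv.symm
        rw [hv b z hb hz1]
        have := List.mem_of_mem_tail hz2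
        rwa [SimpleGraph.Walk.support_reverse, List.mem_reverse] at this
      · -- interior vertex
        set p1 := p.takeUntil a ha with hp1
        set p2 := p.dropUntil a ha with hp2
        obtain ⟨nxt, hn1, hn2⟩ := adj_tail_of_ne p2 hav
        obtain ⟨prv, hq1, hq2⟩ := adj_tail_of_ne p1.reverse hau
        have hprv : prv ∈ p1.support := by
          have := List.mem_of_mem_tail hq2
          rwa [SimpleGraph.Walk.support_reverse, List.mem_reverse] at this
        have hsupp : p.support = p1.support ++ p2.support.tail := by
          rw [← SimpleGraph.Walk.take_spec p ha, SimpleGraph.Walk.support_append]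
        have hne : prv ≠ nxt := by
          intro h
          rw [hsupp] at hnodup
          exact (List.disjoint_of_nodup_append hnodup) hprv (h ▸ hn2)
        have hmem : ∀ z, z = prv ∨ z = nxt → z ∈ p.support := by
          rintro z (rfl | rfl)
          · rw [hsupp]; exact List.mem_append_left _ hprv
          · rw [hsupp]; exact List.mem_append_right _ hn2
        rcases hmax a b prv nxt hb hq1 hn1 with h | h | h
        · exact hmem b (Or.inl h)
        · exact hmem b (Or.inr h)
        · exact absurd h hne
  have hwmem : w ∈ {z | z ∈ p.support} := by
    refine reach_closed hclosed h2 ?_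
    simp only [Set.mem_setOf_eq]
    exact SimpleGraph.Walk.start_mem_support p
  simp only [Set.mem_setOf_eq] at hwmem
  -- w is interior, hence has two distinct neighbors
  set p1 := p.takeUntil w hwmem with hp1
  set p2 := p.dropUntil w hwmem with hp2
  obtain ⟨nxt, hn1, hn2⟩ := adj_tail_of_ne p2 (fun h => hvw h.symm)
  obtain ⟨prv, hq1, hq2⟩ := adj_tail_of_ne p1.reverse (Ne.symm huw)
  have hprv : prv ∈ p1.support := by
    have := List.mem_of_mem_tail hq2
    rwa [SimpleGraph.Walk.support_reverse, List.mem_reverse] at this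
  have hsupp : p.support = p1.support ++ p2.support.tail := by
    rw [← SimpleGraph.Walk.take_spec p hwmem, SimpleGraph.Walk.support_append]
  have hne : prv ≠ nxt := by
    intro h
    rw [hsupp] at hnodup
    exact (List.disjoint_of_nodup_append hnodup) hprv (h ▸ hn2)
  exact hne (hw prv nxt hq1 hn1)

end PureGraph


lemma colored_card_le_degree [Fintype V] [DecidableRel H.Adj] (hdom : Dom H f) (v : V) :
    (Finset.univ.filter fun w => f s(v,w) ≠ none).card ≤ H.degree v := by
  classical
  rw [← card_neighborFinset_eq_degree]
  apply Finset.card_le_card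
  intro w hw
  simp only [Finset.mem_filter, Finset.mem_univ, true_and] at hw
  rw [mem_neighborFinset]
  exact (H.mem_edgeSet).mp (hdom _ hw)

lemma unique_color_nbr (hf : Proper f) {v a b : V} {γ : Fin d}
    (ha : f s(v,a) = some γ) (hb : f s(v,b) = some γ) : a = b := by
  by_contra h
  exact proper_symm hf h ha hb

lemma present_preserved {y xl : V} {f' : Sym2 V → Option (Fin d)} (hxly : xl ≠ y)
    (hhole' : f' s(y, xl) = none) (hoffy : ∀ e, y ∉ e → f' e = f e) {δ : Fin d}
    (h : ¬ Present f xl δ) : ¬ Present f' xl δ := by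
  rintro ⟨w, hw⟩
  by_cases hwy : w = y
  · rw [hwy, Sym2.eq_swap, hhole'] at hw
    exact (nomatch hw)
  · rw [hoffy s(xl, w) ?_] at hw
    · exact h ⟨w, hw⟩
    · intro hy
      rcases Sym2.mem_iff.mp hy with h' | h'
      · exact hxly h'.symm
      · exact hwy h'.symm

/-- Kempe graph avoiding a vertex `y`. -/
def kempeOff {d : ℕ} (f : Sym2 V → Option (Fin d)) (α β : Fin d) (y : V) : SimpleGraph V where
  Adj u v := u ≠ v ∧ u ≠ y ∧ v ≠ y ∧ (f s(u,v) = some α ∨ f s(u,v) = some β)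
  symm := by
    constructor
    intro u v ⟨h1, h2, h3, h4⟩
    refine ⟨h1.symm, h3, h2, ?_⟩
    rwa [Sym2.eq_swap]
  loopless := ⟨fun u h => h.1 rfl⟩

/-- One vertex in a Kempe graph having at most one neighbor. -/
lemma kempe_deg_le_one {g : Sym2 V → Option (Fin d)} (hg : Proper g) {α β : Fin d} {v : V}
    (h : ¬ Present g v α ∨ ¬ Present g v β) :
    ∀ n1 n2, (kempe g α β).Adj v n1 → (kempe g α β).Adj v n2 → n1 = n2 := by
  intro n1 n2 ⟨_, h1⟩ ⟨_, h2⟩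
  rcases h with h | h
  · have e1 : g s(v,n1) = some β := h1.resolve_left (fun hh => h ⟨n1, hh⟩)
    have e2 : g s(v,n2) = some β := h2.resolve_left (fun hh => h ⟨n2, hh⟩)
    exact unique_color_nbr hg e1 e2
  · have e1 : g s(v,n1) = some α := h1.resolve_right (fun hh => h ⟨n1, hh⟩)
    have e2 : g s(v,n2) = some α := h2.resolve_right (fun hh => h ⟨n2, hh⟩)
    exact unique_color_nbr hg e1 e2

lemma kempe_deg_le_two {g : Sym2 V → Option (Fin d)} (hg : Proper g) {α β : Fin d} :
    ∀ (z n1 n2 n3 : V), (kempe g α β).Adj z n1 → (kempe g α β).Adj z n2 →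
      (kempe g α β).Adj z n3 → n1 = n2 ∨ n1 = n3 ∨ n2 = n3 := by
  intro z n1 n2 n3 ⟨_, h1⟩ ⟨_, h2⟩ ⟨_, h3⟩
  rcases h1 with h1 | h1 <;> rcases h2 with h2 | h2 <;> rcases h3 with h3 | h3
  · exact Or.inl (unique_color_nbr hg h1 h2)
  · exact Or.inl (unique_color_nbr hg h1 h2)
  · exact Or.inr (Or.inl (unique_color_nbr hg h1 h3))
  · exact Or.inr (Or.inr (unique_color_nbr hg h2 h3))
  · exact Or.inr (Or.inr (unique_color_nbr hg h2 h3))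
  · exact Or.inr (Or.inl (unique_color_nbr hg h1 h3))
  · exact Or.inl (unique_color_nbr hg h1 h2)
  · exact Or.inl (unique_color_nbr hg h1 h2)

/-- Weak Vizing adjacency lemma: in a critical graph, the other endpoint of any edge has a
neighbor of maximum degree besides the first endpoint. -/
lemma weak_val [Fintype V] [DecidableRel H.Adj]
    (hlb : ¬ EdgeColorable H d)
    (hdle : ∀ v, H.degree v ≤ d)
    (hcrit : ∀ e ∈ H.edgeSet, EdgeColorable (H.deleteEdges {e}) d)
    {x y : V} (hxy : H.Adj x y) :
    ∃ z, H.Adj y z ∧ z ≠ x ∧ H.degree z = d := by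
  classical
  by_contra hgoal
  push_neg at hgoal
  obtain ⟨f, hf, hdom, hhole⟩ :=
    exists_hole_coloring (H := H) s(x,y) (hcrit _ ((H.mem_edgeSet).mpr hxy))
  have hhole_y : Hole H f s(y,x) := by rwa [Sym2.eq_swap]
  have hdlt : ∀ z, H.Adj y z → z ≠ x → H.degree z < d := by
    intro z h1 h2
    exact lt_of_le_of_ne (hdle z) (hgoal z h1 h2)
  -- a color missing at y
  obtain ⟨β, hβ⟩ : ∃ β, ¬ Present f y β :=
    exists_missing (lt_of_lt_of_le (colored_card_lt_degree hdom hxy.symm hhole_y.1) (hdle y))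
  -- building arbitrarily long fans
  have main : ∀ k, ∃ (xs : ℕ → V) (as : ℕ → Fin d),
      xs 0 = x ∧ (∀ m, m ≤ k → H.Adj y (xs m)) ∧
      (∀ m, m ≤ k → ∀ m', m' ≤ k → xs m = xs m' → m = m') ∧
      (∀ m, m ≤ k → ¬ Present f (xs m) (as m)) ∧
      (∀ m, m < k → f s(y, xs (m+1)) = some (as m)) := by
    intro k
    induction k with
    | zero =>
      obtain ⟨α0, hα0⟩ : ∃ γ, ¬ Present f x γ :=
        exists_missing (lt_of_lt_of_le (colored_card_lt_degree hdom hxy hhole.1) (hdle x))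
      refine ⟨fun _ => x, fun _ => α0, rfl, ?_, ?_, ?_, ?_⟩
      · intro m _; exact hxy.symm
      · intro m hm m' hm' _; omega
      · intro m _; exact hα0
      · intro m hm; omega
    | succ k ih =>
      obtain ⟨xs, as, hx0, hadj, hinj, hmiss, hcol⟩ := ih
      -- the color as k must be present at y
      have hyp : Present f y (as k) := by
        by_contra hnp
        obtain ⟨f', hf', hdom', hhole', hoffy, _, _, hpres⟩ :=
          rotate xs as hf hdom hadj hinj hmiss hcol
            (by rwa [hx0, ← Sym2.eq_swap]) k le_rfl
        refine no_extension hlb hf' hdom' ?_ ((H.mem_edgeSet).mpr (hadj k le_rfl)) (γ := as k)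
          (fun h => hnp ((hpres _).mp h)) ?_
        · exact hhole'
        · exact present_preserved (hadj k le_rfl).ne' hhole'.1 hoffy (hmiss k le_rfl)
      obtain ⟨z, hz⟩ := hyp
      have hzy : H.Adj y z := (H.mem_edgeSet).mp (hdom _ (by rw [hz]; exact Option.some_ne_none _))
      have hzx : z ≠ x := by
        rintro rfl
        rw [hhole_y.1] at hz
        exact (nomatch hz)
      obtain ⟨δ, hδ⟩ : ∃ γ, ¬ Present f z γ :=
        exists_missing (lt_of_le_of_lt (colored_card_le_degree hdom z) (hdlt z hzy hzx))
      by_cases hnew : ∀ m, m ≤ k → z ≠ xs m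
      · -- extend the fan
        refine ⟨fun n => if n = k+1 then z else xs n, fun n => if n = k+1 then δ else as n,
          ?_, ?_, ?_, ?_, ?_⟩
        · show (if 0 = k+1 then z else xs 0) = x
          rw [if_neg (by omega)]; exact hx0
        · intro m hm
          show H.Adj y (if m = k+1 then z else xs m)
          by_cases h : m = k+1
          · rw [if_pos h]; exact hzy
          · rw [if_neg h]; exact hadj m (by omega)
        · intro m hm m' hm' he
          simp only at he
          by_cases h : m = k+1 <;> by_cases h' : m' = k+1
          · omega
          · rw [if_pos h, if_neg h'] at he
            exact absurd he (hnew m' (by omega))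
          · rw [if_neg h, if_pos h'] at he
            exact absurd he.symm (hnew m (by omega))
          · rw [if_neg h, if_neg h'] at he
            exact hinj m (by omega) m' (by omega) he
        · intro m hm
          show ¬ Present f (if m = k+1 then z else xs m) (if m = k+1 then δ else as m)
          by_cases h : m = k+1
          · rw [if_pos h, if_pos h]; exact hδ
          · rw [if_neg h, if_neg h]; exact hmiss m (by omega)
        · intro m hm
          show f s(y, if m+1 = k+1 then z else xs (m+1)) = some (if m = k+1 then δ else as m)
          by_cases h : m = k
          · subst h
            rw [if_pos rfl, if_neg (by omega)]
            exact hz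
          · rw [if_neg (by omega), if_neg (by omega)]
            exact hcol m (by omega)
      · -- the fan closes up : THE hard case, contradiction
        exfalso
        push_neg at hnew
        obtain ⟨j, hjk, hjz⟩ := hnew
        have hcolj : f s(y, xs j) = some (as k) := by rw [← hjz]; exact hz
        have hj1 : 1 ≤ j := by
          rcases Nat.eq_zero_or_pos j with h | h
          · exfalso; apply hzx; rw [hjz, h, hx0]
          · exact h
        have hjk' : j < k := by
          rcases lt_or_eq_of_le hjk with h | h
          · exact h
          · exfalso
            apply hmiss k le_rfl
            have hck := hcolj
            rw [h] at hck
            exact ⟨y, by rw [Sym2.eq_swap]; exact hck⟩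
        set l := j - 1 with hl
        have hjl : j = l + 1 := by omega
        have hasl : as l = as k := by
          have h1 : f s(y, xs (l+1)) = some (as l) := hcol l (by omega)
          rw [← hjl] at h1
          exact Option.some_injective _ (h1.symm.trans hcolj)
        set α := as k with hα
        have hαβ : α ≠ β := fun h => hβ (h ▸ ⟨z, hz⟩)
        have has_inj : ∀ m, m < k → ∀ m', m' < k → as m = as m' → m = m' := by
          intro m hm m' hm' he
          have h1 : f s(y, xs (m+1)) = some (as m) := hcol m hm
          have h2 : f s(y, xs (m'+1)) = some (as m) := by rw [he]; exact hcol m' hm'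
          have h3 := unique_color_nbr hf h1 h2
          have := hinj (m+1) (by omega) (m'+1) (by omega) h3
          omega
        obtain ⟨fl, hfl, hdoml, hholel, hoffyl, hfanl, hotherl, hpresl⟩ :=
          rotate xs as hf hdom hadj hinj hmiss hcol (by rwa [hx0, ← Sym2.eq_swap]) l (by omega)
        obtain ⟨fi, hfi, hdomi, hholei, hoffyi, hfani, hotheri, hpresi⟩ :=
          rotate xs as hf hdom hadj hinj hmiss hcol (by rwa [hx0, ← Sym2.eq_swap]) k le_rfl
        have hly : xs l ≠ y := (hadj l (by omega)).ne'
        have hjy : xs j ≠ y := (hadj j (by omega)).ne'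
        have hky : xs k ≠ y := (hadj k le_rfl).ne'
        have hβl : ¬ Present fl y β := fun h => hβ ((hpresl β).mp h)
        have hβi : ¬ Present fi y β := fun h => hβ ((hpresi β).mp h)
        have hmf : ¬ Present f (xs l) α := by
          rw [← hasl]; exact hmiss l (by omega)
        have hmissl : ¬ Present fl (xs l) α := present_preserved hly hholel.1 hoffyl hmf
        have hmissk : ¬ Present fi (xs k) α :=
          present_preserved hky hholei.1 hoffyi (by rw [hα]; exact hmiss k le_rfl)
        have hRl : (kempe fl α β).Reachable (xs l) y :=
          kempe_reach hlb hfl hdoml (by rw [Sym2.eq_swap]; exact hholel)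
            (by rw [Sym2.eq_swap]; exact (H.mem_edgeSet).mpr (hadj l (by omega)))
            hαβ hmissl hβl
        have hRk : (kempe fi α β).Reachable (xs k) y :=
          kempe_reach hlb hfi hdomi (by rw [Sym2.eq_swap]; exact hholei)
            (by rw [Sym2.eq_swap]; exact (H.mem_edgeSet).mpr (hadj k le_rfl))
            hαβ hmissk hβi
        have hflj : fl s(y, xs j) = some α := by
          rw [hotherl (xs j) hjy ?_]
          · exact hcolj
          · intro m hm he
            have := hinj j (by omega) m (by omega) he
            omega
        have huniq : ∀ u, (kempe fl α β).Adj y u → u = xs j := by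
          rintro u ⟨hne, hc | hc⟩
          · exact unique_color_nbr hfl hc hflj
          · exact absurd ⟨u, hc⟩ hβl
        have hDreach : (kempeOff f α β y).Reachable (xs l) (xs j) := by
          obtain ⟨p⟩ := hRl
          refine reach_avoid huniq ?_ p rfl hly
          intro u v' huv hu hv
          obtain ⟨h1, h2⟩ := huv
          refine ⟨h1, hu, hv, ?_⟩
          rw [← hoffyl s(u,v') ?_]
          · exact h2
          · intro hy
            rcases Sym2.mem_iff.mp hy with h | h
            · exact hu h.symm
            · exact hv h.symm
        have hDle : (kempeOff f α β y) ≤ (kempe fi α β) := by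
          rintro u v' ⟨h1, h2, h3, h4⟩
          refine ⟨h1, ?_⟩
          rw [hoffyi s(u,v') ?_]
          · exact h4
          · intro hy
            rcases Sym2.mem_iff.mp hy with h | h
            · exact h2 h.symm
            · exact h3 h.symm
        have hDreach' : (kempe fi α β).Reachable (xs l) (xs j) := Reachable.mono hDle hDreach
        have hadjyl : (kempe fi α β).Adj y (xs l) := by
          refine ⟨Ne.symm hly, Or.inl ?_⟩
          rw [← hasl]
          exact hfani l (by omega)
        have hRyj : (kempe fi α β).Reachable y (xs j) := (hadjyl.reachable).trans hDreach'
        have hmissj : ¬ Present fi (xs j) α := by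
          rintro ⟨w, hw⟩
          by_cases hwy : w = y
          · rw [hwy, Sym2.eq_swap] at hw
            have h1 : fi s(y, xs j) = some (as j) := hfani j (by omega)
            rw [h1] at hw
            have h0 : as j = α := Option.some_injective _ hw
            have h2 : as j = as l := by rw [hasl]; exact h0
            have := has_inj j (by omega) l (by omega) h2
            omega
          · rw [hoffyi s(xs j, w) ?_] at hw
            · have h1 : f s(xs j, y) = some α := by
                rw [Sym2.eq_swap, hα]; exact hcolj
              exact hwy (unique_color_nbr hf hw h1)
            · intro hy
              rcases Sym2.mem_iff.mp hy with h | h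
              · exact hjy h.symm
              · exact hwy h.symm
        refine three_endpoints (G := kempe fi α β) (u := y) (v := xs k) (w := xs j)
          (Ne.symm hky) (Ne.symm hjy) ?_ ?_ ?_ ?_ (kempe_deg_le_two hfi) hRk.symm hRyj
        · intro h
          have := hinj k le_rfl j (by omega) h
          omega
        · exact kempe_deg_le_one hfi (Or.inr hβi)
        · exact kempe_deg_le_one hfi (Or.inl hmissk)
        · exact kempe_deg_le_one hfi (Or.inl hmissj)
  -- pigeonhole
  obtain ⟨xs, as, hx0, hadj, hinj, hmiss, hcol⟩ := main (Fintype.card V)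
  have hinj' : Function.Injective (fun i : Fin (Fintype.card V + 1) => xs i) := by
    intro i i' he
    have := hinj i (by omega) i' (by omega) he
    exact Fin.ext this
  have := Fintype.card_le_of_injective _ hinj'
  simp only [Fintype.card_fin] at this
  omega


section CycleConstruction
variable {W : Type*} {G : SimpleGraph W}

lemma walk_of_seq (f : ℕ → W) (h : ∀ n, G.Adj (f n) (f (n+1))) (a : ℕ) :
    ∀ n, ∃ w : G.Walk (f a) (f (a+n)),
      w.support = (List.range (n+1)).map (fun t => f (a+t)) ∧
      w.edges = (List.range n).map (fun t => s(f (a+t), f (a+t+1))) := by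
  intro n
  induction n with
  | zero =>
    refine ⟨SimpleGraph.Walk.nil' (f a), ?_, ?_⟩ <;> simp [List.range_succ]
  | succ n ih =>
    obtain ⟨w, hs, he⟩ := ih
    refine ⟨w.concat (h (a+n)), ?_, ?_⟩
    · rw [SimpleGraph.Walk.support_concat, hs]
      conv_rhs => rw [List.range_succ]
      rw [List.map_append]
      rfl
    · rw [SimpleGraph.Walk.edges_concat, he, List.concat_eq_append]
      conv_rhs => rw [List.range_succ]
      rw [List.map_append]
      rfl

lemma cycle_of_seq (f : ℕ → W)
    (hadj : ∀ n, G.Adj (f n) (f (n+1))) (hne2 : ∀ n, f (n+2) ≠ f n)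
    (i j : ℕ) (hij : i < j) (hfij : f i = f j)
    (hmin : ∀ m, m < j → ∀ m', m' < m → f m' ≠ f m) :
    ∃ (v : W) (c : G.Walk v v), c.IsCycle := by
  have hj1 : j ≠ i + 1 := by
    intro h
    subst h
    exact (hfij ▸ hadj i).ne rfl
  have hj2 : j ≠ i + 2 := by
    intro h
    subst h
    exact hne2 i hfij.symm
  have hn : ∃ n, j = i + n + 1 ∧ 2 ≤ n := ⟨j - i - 1, by omega, by omega⟩
  obtain ⟨n, rfl, hn2⟩ := hn
  obtain ⟨w, hs, he⟩ := walk_of_seq f hadj i n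
  have hinjidx : ∀ t t', t ≤ n → t' ≤ n → f (i+t) = f (i+t') → t = t' := by
    intro t t' ht ht' hf
    rcases lt_trichotomy t t' with h | h | h
    · exact absurd hf (hmin (i+t') (by omega) (i+t) (by omega))
    · exact h
    · exact absurd hf.symm (hmin (i+t) (by omega) (i+t') (by omega))
  have hpath : w.IsPath := by
    rw [SimpleGraph.Walk.isPath_def, hs]
    refine List.Nodup.map_on ?_ List.nodup_range
    intro t ht t' ht' hf
    rw [List.mem_range] at ht ht'
    exact hinjidx t t' (by omega) (by omega) hf
  have hadj_last : G.Adj (f (i+n)) (f i) := by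
    have := hadj (i+n)
    rwa [show i+n+1 = i+n+1 from rfl, ← hfij] at this
  have hnotmem : s(f i, f (i+n)) ∉ w.reverse.edges := by
    rw [SimpleGraph.Walk.edges_reverse, List.mem_reverse, he]
    intro hmem
    rw [List.mem_map] at hmem
    obtain ⟨t, ht, hteq⟩ := hmem
    rw [List.mem_range] at ht
    rcases Sym2.eq_iff.mp hteq with ⟨h1, h2⟩ | ⟨h1, h2⟩
    · have ht0 : t = 0 := hinjidx t 0 (by omega) (by omega) (by rw [h1]; norm_num)
      subst ht0
      have := hinjidx 1 n (by omega) (by omega) (by rw [h2])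
      omega
    · have := hinjidx t n (by omega) (by omega) (by rw [h1])
      omega
  refine ⟨f i, SimpleGraph.Walk.cons hadj_last.symm w.reverse, ?_⟩
  exact SimpleGraph.Path.cons_isCycle ⟨w.reverse, hpath.reverse⟩ hadj_last.symm hnotmem

/-- A graph in which every vertex has a neighbor avoiding any prescribed vertex,
and which has a vertex, has a cycle. -/
lemma exists_cycle [Fintype W] (hne : Nonempty W)
    (hstep : ∀ a b : W, ∃ c, G.Adj a c ∧ c ≠ b) :
    ∃ (v : W) (c : G.Walk v v), c.IsCycle := by
  classical
  obtain ⟨a₀⟩ := hne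
  set step : W → W → W := fun a b => Classical.choose (hstep a b) with hstepdef
  have hstep1 : ∀ a b, G.Adj a (step a b) := fun a b => (Classical.choose_spec (hstep a b)).1
  have hstep2 : ∀ a b, step a b ≠ b := fun a b => (Classical.choose_spec (hstep a b)).2
  set F : ℕ → W × W := fun n => Nat.rec (a₀, step a₀ a₀)
    (fun _ p => (p.2, step p.2 p.1)) n with hF
  set f : ℕ → W := fun n => (F n).1 with hf
  have hFsucc : ∀ n, F (n+1) = ((F n).2, step (F n).2 (F n).1) := fun n => rfl
  have hfsucc : ∀ n, f (n+1) = (F n).2 := fun n => rfl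
  have hadj : ∀ n, G.Adj (f n) (f (n+1)) := by
    intro n
    cases n with
    | zero => exact hstep1 a₀ a₀
    | succ m =>
      rw [hfsucc (m+1), hFsucc m]
      exact hstep1 _ _
  have hne2 : ∀ n, f (n+2) ≠ f n := by
    intro n
    rw [hfsucc (n+1), hFsucc n]
    show step (F n).2 (F n).1 ≠ (F n).1
    exact hstep2 _ _
  -- pigeonhole: some repetition
  have hP : ∃ n, ∃ m, m < n ∧ f m = f n := by
    obtain ⟨x, y, hxy, hfxy⟩ := Fintype.exists_ne_map_eq_of_card_lt
      (fun i : Fin (Fintype.card W + 1) => f i) (by simp)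
    rcases lt_or_gt_of_ne hxy with h | h
    · exact ⟨y, x, h, hfxy⟩
    · exact ⟨x, y, h, hfxy.symm⟩
  set j := Nat.find hP with hj
  obtain ⟨i, hij, hfij⟩ := Nat.find_spec hP
  refine cycle_of_seq f hadj hne2 i j hij hfij ?_
  intro m hm m' hm' hfm
  exact Nat.find_min hP hm ⟨m', hm', hfm⟩

end CycleConstruction

end VizingAux


/-- In an edge-critical graph with maximum degree `d ≥ 2`, the subgraph induced by
the vertices of degree `d` contains a cycle. -/
theorem statement10 {V : Type*} [Fintype V] (H : SimpleGraph V) [DecidableRel H.Adj] (d : ℕ)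
    (hd : 2 ≤ d) (hmax : H.maxDegree = d)
    (hub : EdgeColorable H (d + 1)) (hlb : ¬ EdgeColorable H d)
    (hcrit : ∀ e ∈ H.edgeSet, EdgeColorable (H.deleteEdges {e}) d) :
    ∃ (v : {v : V // H.degree v = d})
      (c : (SimpleGraph.induce {v : V | H.degree v = d} H).Walk v v), c.IsCycle := by
  classical
  have hVne : Nonempty V := by
    by_contra h
    rw [not_nonempty_iff] at h
    have h0 : H.maxDegree = 0 := by
      rw [SimpleGraph.maxDegree, Finset.univ_eq_empty, Finset.image_empty]
      rfl
    omega
  have hdle : ∀ v, H.degree v ≤ d := fun v => hmax ▸ H.degree_le_maxDegree v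
  have wval : ∀ {x y : V}, H.Adj x y → ∃ z, H.Adj y z ∧ z ≠ x ∧ H.degree z = d :=
    fun hxy => VizingAux.weak_val hlb hdle hcrit hxy
  obtain ⟨v₀, hv₀⟩ := H.exists_maximal_degree_vertex
  have hv₀d : H.degree v₀ = d := by rw [← hv₀]; exact hmax
  have two : ∀ v : V, H.degree v = d → ∃ z₁ z₂, z₁ ≠ z₂ ∧ H.Adj v z₁ ∧ H.Adj v z₂ ∧
      H.degree z₁ = d ∧ H.degree z₂ = d := by
    intro v hv
    have hpos : 0 < H.degree v := by omega
    obtain ⟨x, hx⟩ := (H.degree_pos_iff_exists_adj v).mp hpos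
    obtain ⟨z₁, hz₁v, _, hz₁d⟩ := wval hx.symm
    obtain ⟨z₂, hz₂v, hz₂z₁, hz₂d⟩ := wval hz₁v.symm
    exact ⟨z₁, z₂, Ne.symm hz₂z₁, hz₁v, hz₂v, hz₁d, hz₂d⟩
  have hne : Nonempty ↥{v : V | H.degree v = d} := ⟨⟨v₀, hv₀d⟩⟩
  have hstep : ∀ a b : ↥{v : V | H.degree v = d},
      ∃ c, (SimpleGraph.induce {v : V | H.degree v = d} H).Adj a c ∧ c ≠ b := by
    intro a b
    obtain ⟨z₁, z₂, hz, ha1, ha2, hd1, hd2⟩ := two a.1 a.2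
    by_cases hb : (⟨z₁, hd1⟩ : ↥{v : V | H.degree v = d}) = b
    · refine ⟨⟨z₂, hd2⟩, ha2, ?_⟩
      intro h
      exact hz (congrArg Subtype.val (hb.trans h.symm))
    · exact ⟨⟨z₁, hd1⟩, ha1, hb⟩
  obtain ⟨v, c, hc⟩ := VizingAux.exists_cycle hne hstep
  exact ⟨v, c, hc⟩
end

section
/- If a bipartite simple graph H contains K_t as a subdivision for every t, then for t ≥ 3 the graph H does not contain K_t as a totally odd immersion; in particular, subdivisions and totally odd immersions are incomparable containment relations: there exists a graph containing K_3 as a subdivision but not as a totally odd immersion, and a graph containing K_5 as a totally odd immersion but not as a subdivision. -/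
open SimpleGraph

lemma walk_parity {V : Type} {H : SimpleGraph V} (c : V → ZMod 2)
    (hval : ∀ {u v}, H.Adj u v → c u ≠ c v) :
    ∀ {u v : V} (p : H.Walk u v), c v = c u + p.length := by
  intro u v p
  induction p with
  | nil => simp
  | @cons u w v h q ih =>
    have h1 : c w = c u + 1 := by
      revert hval
      have : ∀ x y : ZMod 2, x ≠ y → y = x + 1 := by decide
      exact fun hv => this _ _ (hv h)
    rw [ih, h1]
    push_cast [SimpleGraph.Walk.length_cons]
    ring

lemma no_toi_of_colorable {V : Type} {H : SimpleGraph V} (hc : H.Colorable 2)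
    (t : ℕ) (ht : 3 ≤ t) : ¬ TotallyOddCliqueImmersion H t := by
  rintro ⟨φ, P, hpath, hodd, hdisj⟩
  obtain ⟨C⟩ := hc
  set c : V → ZMod 2 := fun v => (C v : Fin 2) with hc'
  have hval : ∀ {u v}, H.Adj u v → c u ≠ c v := by
    intro u v h hn
    exact C.valid h (by exact_mod_cast hn)
  have oddcast : ∀ {n : ℕ}, Odd n → (n : ZMod 2) = 1 := by
    intro n hn
    obtain ⟨k, hk⟩ := hn
    subst hk
    push_cast
    have : (2 : ZMod 2) = 0 := by decide
    rw [this]; ring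
  have i0 : Fin t := ⟨0, by omega⟩
  have i1 : Fin t := ⟨1, by omega⟩
  have i2 : Fin t := ⟨2, by omega⟩
  have key : ∀ i j : Fin t, i < j → c (φ j) = c (φ i) + 1 := by
    intro i j hij
    rw [walk_parity c hval (P i j), oddcast (hodd i j hij)]
  have h01 : c (φ (⟨1, by omega⟩ : Fin t)) = c (φ ⟨0, by omega⟩) + 1 :=
    key _ _ (by simp [Fin.lt_def])
  have h02 : c (φ (⟨2, by omega⟩ : Fin t)) = c (φ ⟨0, by omega⟩) + 1 :=
    key _ _ (by simp [Fin.lt_def])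
  have h12 : c (φ (⟨2, by omega⟩ : Fin t)) = c (φ ⟨1, by omega⟩) + 1 :=
    key _ _ (by simp [Fin.lt_def])
  rw [h01, h02] at h12
  have : ∀ x : ZMod 2, x + 1 ≠ x + 1 + 1 := by decide
  exact this _ h12

def el6 : List (Fin 6 × Fin 6) := [(0,1),(1,2),(2,3),(3,4),(4,5),(5,0)]

def G6 : SimpleGraph (Fin 6) := SimpleGraph.fromRel (fun a b => (a,b) ∈ el6)

instance : DecidableRel G6.Adj := fun a b =>
  decidable_of_iff _ (SimpleGraph.fromRel_adj (fun a b => (a,b) ∈ el6) a b).symm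

def phi6 : Fin 3 → Fin 6
  | ⟨0,_⟩ => 0
  | ⟨1,_⟩ => 2
  | ⟨2,_⟩ => 4

def w6a : G6.Walk 0 2 := .cons (by decide : G6.Adj 0 1) (.cons (by decide : G6.Adj 1 2) .nil)
def w6b : G6.Walk 2 4 := .cons (by decide : G6.Adj 2 3) (.cons (by decide : G6.Adj 3 4) .nil)
def w6c : G6.Walk 0 4 := .cons (by decide : G6.Adj 0 5) (.cons (by decide : G6.Adj 5 4) .nil)

def P6 : (u w : Fin 3) → G6.Walk (phi6 u) (phi6 w)
  | ⟨0,_⟩, ⟨0,_⟩ => .nil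
  | ⟨0,_⟩, ⟨1,_⟩ => w6a
  | ⟨0,_⟩, ⟨2,_⟩ => w6c
  | ⟨1,_⟩, ⟨0,_⟩ => w6a.reverse
  | ⟨1,_⟩, ⟨1,_⟩ => .nil
  | ⟨1,_⟩, ⟨2,_⟩ => w6b
  | ⟨2,_⟩, ⟨0,_⟩ => w6c.reverse
  | ⟨2,_⟩, ⟨1,_⟩ => w6b.reverse
  | ⟨2,_⟩, ⟨2,_⟩ => .nil

lemma sub6 : ContainsSubdivision G6 (⊤ : SimpleGraph (Fin 3)) := by
  refine ⟨⟨phi6, by decide⟩, fun u w _ => P6 u w, ?_, ?_, ?_, ?_⟩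
  · intro u w h
    fin_cases u <;> fin_cases w <;>
      first
        | exact absurd rfl h
        | (rw [SimpleGraph.Walk.isPath_def]; exact of_decide_eq_true (Eq.refl true))
  · intro u w h
    fin_cases u <;> fin_cases w <;>
      first
        | exact absurd rfl h
        | rfl
        | exact (SimpleGraph.Walk.reverse_reverse _).symm
  · intro u w h
    fin_cases u <;> fin_cases w <;>
      first
        | exact absurd rfl h
        | exact of_decide_eq_true (Eq.refl true)
  · intro u w u' w' h h' hne
    fin_cases u <;> fin_cases w <;> fin_cases u' <;> fin_cases w' <;>
      first
        | exact absurd rfl h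
        | exact absurd rfl h'
        | exact absurd rfl hne
        | exact absurd Sym2.eq_swap hne
        | exact of_decide_eq_true (Eq.refl true)

def el20 : List (Fin 20 × Fin 20) :=
  [(1,2),(1,3),(2,3),(1,4),(1,5),(2,6),(2,7),(3,8),(3,9),
   (0,4),(0,5),(0,6),(0,7),(0,8),(0,9),
   (10,11),(0,10),(10,12),(12,13),(0,13),(10,14),(14,15),(0,15),
   (0,11),(11,16),(16,17),(0,17),(11,18),(18,19),(0,19)]

def G20 : SimpleGraph (Fin 20) := SimpleGraph.fromRel (fun a b => (a,b) ∈ el20)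

instance : DecidableRel G20.Adj := fun a b =>
  decidable_of_iff _ (SimpleGraph.fromRel_adj (fun a b => (a,b) ∈ el20) a b).symm

/-- If a vertex in `{1,…,9}` is joined by a walk to a vertex in `{10,…,19}`,
the walk passes through `0`. -/
lemma sep20 : ∀ {u v : Fin 20} (p : G20.Walk u v),
    1 ≤ u.val → u.val ≤ 9 → 10 ≤ v.val → (0 : Fin 20) ∈ p.support := by
  intro u v p
  induction p with
  | nil => intro h1 h2 h3; omega
  | @cons u w v h q ih =>
    intro h1 h2 h3
    have step : ∀ a b : Fin 20, G20.Adj a b → 1 ≤ a.val → a.val ≤ 9 →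
        b = 0 ∨ (1 ≤ b.val ∧ b.val ≤ 9) := by decide
    rcases step u w h h1 h2 with hw | ⟨hw1, hw2⟩
    · subst hw
      exact List.mem_cons_of_mem _ (SimpleGraph.Walk.start_mem_support q)
    · exact List.mem_cons_of_mem _ (ih hw1 hw2 h3)

lemma snd_spec {V : Type} {G : SimpleGraph V} {u v : V} (p : G.Walk u v) (hne : u ≠ v) :
    ∃ s, G.Adj u s ∧ s ∈ p.support ∧ s ≠ u := by
  cases p with
  | nil => exact absurd rfl hne
  | @cons _ w _ h q =>
    exact ⟨w, h, List.mem_cons_of_mem _ (SimpleGraph.Walk.start_mem_support q), h.ne'⟩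

def w01 : G20.Walk 1 2 := (.cons (by decide : G20.Adj 1 2) .nil)
def w02 : G20.Walk 1 3 := (.cons (by decide : G20.Adj 1 3) .nil)
def w03 : G20.Walk 1 10 := (.cons (by decide : G20.Adj 1 4) (.cons (by decide : G20.Adj 4 0) (.cons (by decide : G20.Adj 0 10) .nil)))
def w04 : G20.Walk 1 11 := (.cons (by decide : G20.Adj 1 5) (.cons (by decide : G20.Adj 5 0) (.cons (by decide : G20.Adj 0 11) .nil)))
def w12 : G20.Walk 2 3 := (.cons (by decide : G20.Adj 2 3) .nil)
def w13 : G20.Walk 2 10 := (.cons (by decide : G20.Adj 2 6) (.cons (by decide : G20.Adj 6 0) (.cons (by decide : G20.Adj 0 13) (.cons (by decide : G20.Adj 13 12) (.cons (by decide : G20.Adj 12 10) .nil)))))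
def w14 : G20.Walk 2 11 := (.cons (by decide : G20.Adj 2 7) (.cons (by decide : G20.Adj 7 0) (.cons (by decide : G20.Adj 0 17) (.cons (by decide : G20.Adj 17 16) (.cons (by decide : G20.Adj 16 11) .nil)))))
def w23 : G20.Walk 3 10 := (.cons (by decide : G20.Adj 3 8) (.cons (by decide : G20.Adj 8 0) (.cons (by decide : G20.Adj 0 15) (.cons (by decide : G20.Adj 15 14) (.cons (by decide : G20.Adj 14 10) .nil)))))
def w24 : G20.Walk 3 11 := (.cons (by decide : G20.Adj 3 9) (.cons (by decide : G20.Adj 9 0) (.cons (by decide : G20.Adj 0 19) (.cons (by decide : G20.Adj 19 18) (.cons (by decide : G20.Adj 18 11) .nil)))))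
def w34 : G20.Walk 10 11 := (.cons (by decide : G20.Adj 10 11) .nil)

def phi20 : Fin 5 → Fin 20
  | ⟨0,_⟩ => 1
  | ⟨1,_⟩ => 2
  | ⟨2,_⟩ => 3
  | ⟨3,_⟩ => 10
  | ⟨4,_⟩ => 11

def P20 : (i j : Fin 5) → G20.Walk (phi20 i) (phi20 j)
  | ⟨0,_⟩, ⟨0,_⟩ => .nil
  | ⟨0,_⟩, ⟨1,_⟩ => w01
  | ⟨0,_⟩, ⟨2,_⟩ => w02
  | ⟨0,_⟩, ⟨3,_⟩ => w03
  | ⟨0,_⟩, ⟨4,_⟩ => w04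
  | ⟨1,_⟩, ⟨0,_⟩ => w01.reverse
  | ⟨1,_⟩, ⟨1,_⟩ => .nil
  | ⟨1,_⟩, ⟨2,_⟩ => w12
  | ⟨1,_⟩, ⟨3,_⟩ => w13
  | ⟨1,_⟩, ⟨4,_⟩ => w14
  | ⟨2,_⟩, ⟨0,_⟩ => w02.reverse
  | ⟨2,_⟩, ⟨1,_⟩ => w12.reverse
  | ⟨2,_⟩, ⟨2,_⟩ => .nil
  | ⟨2,_⟩, ⟨3,_⟩ => w23
  | ⟨2,_⟩, ⟨4,_⟩ => w24
  | ⟨3,_⟩, ⟨0,_⟩ => w03.reverse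
  | ⟨3,_⟩, ⟨1,_⟩ => w13.reverse
  | ⟨3,_⟩, ⟨2,_⟩ => w23.reverse
  | ⟨3,_⟩, ⟨3,_⟩ => .nil
  | ⟨3,_⟩, ⟨4,_⟩ => w34
  | ⟨4,_⟩, ⟨0,_⟩ => w04.reverse
  | ⟨4,_⟩, ⟨1,_⟩ => w14.reverse
  | ⟨4,_⟩, ⟨2,_⟩ => w24.reverse
  | ⟨4,_⟩, ⟨3,_⟩ => w34.reverse
  | ⟨4,_⟩, ⟨4,_⟩ => .nil

instance instDisjDec {α : Type} [DecidableEq α] (l1 l2 : List α) :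
    Decidable (l1.Disjoint l2) :=
  inferInstanceAs (Decidable (∀ a ∈ l1, a ∉ l2))

lemma toi20 : ∃ φ : Fin 5 ↪ Fin 20, ∃ P : (i j : Fin 5) → G20.Walk (φ i) (φ j),
    (∀ i j : Fin 5, i < j → (P i j).IsPath) ∧
    (∀ i j : Fin 5, i < j → Odd (P i j).length) ∧
    (∀ i j i' j' : Fin 5, i < j → i' < j' → (i, j) ≠ (i', j') →
      List.Disjoint (P i j).edges (P i' j').edges) := by
  refine ⟨⟨phi20, by decide⟩, P20, ?_, by decide, ?_⟩
  · simp only [SimpleGraph.Walk.isPath_def]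
    decide
  · decide

lemma noSub20 : ¬ ContainsSubdivision G20 (⊤ : SimpleGraph (Fin 5)) := by
  rintro ⟨φ, P, hpath, hsymm, hint, hdisj⟩
  have topadj : ∀ {i j : Fin 5}, i ≠ j → (⊤ : SimpleGraph (Fin 5)).Adj i j := fun h => h
  have sym2ne : ∀ {i j k : Fin 5}, i ≠ j → i ≠ k → j ≠ k → s(i, j) ≠ s(i, k) := by
    intro i j k hij hik hjk heq
    rcases Sym2.eq_iff.1 heq with ⟨-, h⟩ | ⟨h1, h2⟩
    · exact hjk h
    · exact hik h1
  have cross : ∀ (i j k : Fin 5) (hij : i ≠ j) (hik : i ≠ k), j ≠ k →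
      (0 : Fin 20) ∈ (P (topadj hij)).support →
      (0 : Fin 20) ∈ (P (topadj hik)).support →
      (φ i).val ≠ 0 → (φ j).val ≠ 0 → False := by
    intro i j k hij hik hjk m1 m2 hi hj
    have := hdisj (topadj hij) (topadj hik) (sym2ne hij hik hjk) 0 m1 m2
    rcases this.1 with h | h
    · exact hi (congrArg Fin.val h.symm)
    · exact hj (congrArg Fin.val h.symm)
  have mem0 : ∀ (i j : Fin 5) (hij : i ≠ j), 1 ≤ (φ i).val → (φ i).val ≤ 9 →
      10 ≤ (φ j).val → (0 : Fin 20) ∈ (P (topadj hij)).support :=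
    fun i j hij h1 h2 h3 => sep20 _ h1 h2 h3
  have mem0' : ∀ (i j : Fin 5) (hij : i ≠ j), 10 ≤ (φ i).val → 1 ≤ (φ j).val →
      (φ j).val ≤ 9 → (0 : Fin 20) ∈ (P (topadj hij)).support := by
    intro i j hij h1 h2 h3
    have h := mem0 j i hij.symm h2 h3 h1
    have heq : P (topadj hij.symm) = (P (topadj hij)).reverse := hsymm (topadj hij)
    rw [heq, SimpleGraph.Walk.support_reverse, List.mem_reverse] at h
    exact h
  have pick : ∀ i j : Fin 5, i ≠ j →
      ∃ k l : Fin 5, k ≠ l ∧ k ≠ i ∧ k ≠ j ∧ l ≠ i ∧ l ≠ j := by decide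
  have onesided : ¬ ∃ i j : Fin 5, (1 ≤ (φ i).val ∧ (φ i).val ≤ 9) ∧ 10 ≤ (φ j).val := by
    rintro ⟨i, j, ⟨hi1, hi9⟩, hj⟩
    have hij : i ≠ j := by
      intro h; subst h; omega
    obtain ⟨k, l, hkl, hki, hkj, hli, hlj⟩ := pick i j hij
    have hone : ∃ m : Fin 5, m ≠ i ∧ m ≠ j ∧ (φ m).val ≠ 0 := by
      by_cases hk : (φ k).val = 0
      · refine ⟨l, hli, hlj, ?_⟩
        intro hl
        exact hkl (φ.injective (Fin.ext (by omega : (φ k).val = (φ l).val)))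
      · exact ⟨k, hki, hkj, hk⟩
    obtain ⟨m, hmi, hmj, hm0⟩ := hone
    by_cases hm : (φ m).val ≤ 9
    · exact cross j i m hij.symm hmj.symm (fun h => hmi (h.symm ▸ rfl))
        (mem0' j i hij.symm hj hi1 hi9)
        (mem0' j m hmj.symm hj (by omega) hm)
        (by omega) (by omega)
    · exact cross i j m hij hmi.symm hmj.symm
        (mem0 i j hij hi1 hi9 hj)
        (mem0 i m hmi.symm hi1 hi9 (by omega))
        (by omega) (by omega)
  have hdeg : ∀ i : Fin 5, 4 ≤ G20.degree (φ i) := by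
    intro i
    classical
    have hchoice : ∀ (j : Fin 5) (h : j ≠ i), ∃ s : Fin 20,
        G20.Adj (φ i) s ∧ s ∈ (P (topadj h.symm)).support ∧ s ≠ φ i := by
      intro j hj
      exact snd_spec _ (fun he => hj (φ.injective he.symm))
    set f : Fin 5 → Fin 20 := fun j =>
      if h : j = i then φ i else (hchoice j h).choose with hf
    have hmem : ∀ j ∈ Finset.univ.erase i, f j ∈ G20.neighborFinset (φ i) := by
      intro j hj
      have hji : j ≠ i := Finset.ne_of_mem_erase hj
      simp only [hf, dif_neg hji, SimpleGraph.mem_neighborFinset]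
      exact (hchoice j hji).choose_spec.1
    have hinj : Set.InjOn f (Finset.univ.erase i) := by
      intro a ha b hb hab
      simp only [Finset.coe_erase, Finset.coe_univ, Set.mem_diff, Set.mem_univ, true_and,
        Set.mem_singleton_iff] at ha hb
      by_contra hne
      have hsa := (hchoice a ha).choose_spec
      have hsb := (hchoice b hb).choose_spec
      rw [hf] at hab
      simp only [dif_neg ha, dif_neg hb] at hab
      have hd := hdisj (topadj (Ne.symm ha)) (topadj (Ne.symm hb))
        (sym2ne (Ne.symm ha) (Ne.symm hb) hne) _ hsa.2.1 (hab ▸ hsb.2.1)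
      rcases hd.1 with h1 | h1
      · exact hsa.2.2 h1
      · rcases hd.2 with h2 | h2
        · exact hsa.2.2 h2
        · exact hne (φ.injective (h1.symm.trans h2))
    have hle := Finset.card_le_card_of_injOn f hmem hinj
    have h4 : (Finset.univ.erase i).card = 4 := by
      rw [Finset.card_erase_of_mem (Finset.mem_univ i)]
      simp
    rw [h4] at hle
    exact hle
  have hcard : ∀ (T : Finset (Fin 20)), (∀ i : Fin 5, φ i ∈ T) → 5 ≤ T.card := by
    intro T hT
    have := Finset.card_le_card_of_injOn (s := Finset.univ) φ (fun i _ => hT i)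
      (φ.injective.injOn)
    simpa using this
  by_cases hA : ∀ i : Fin 5, (φ i).val ≤ 9
  · have hsub : ∀ v : Fin 20, v.val ≤ 9 → 4 ≤ G20.degree v →
        v ∈ ({0, 1, 2, 3} : Finset (Fin 20)) := by decide
    have := hcard {0, 1, 2, 3} (fun i => hsub _ (hA i) (hdeg i))
    exact absurd this (by decide)
  · push_neg at hA
    obtain ⟨i0, hi0⟩ := hA
    have hB : ∀ i : Fin 5, (φ i).val = 0 ∨ 10 ≤ (φ i).val := by
      intro i
      by_contra h
      push_neg at h
      exact onesided ⟨i, i0, ⟨by omega, by omega⟩, by omega⟩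
    have hsub : ∀ v : Fin 20, (v.val = 0 ∨ 10 ≤ v.val) → 4 ≤ G20.degree v →
        v ∈ ({0, 10, 11} : Finset (Fin 20)) := by decide
    have := hcard {0, 10, 11} (fun i => hsub _ (hB i) (hdeg i))
    exact absurd this (by decide)

lemma col6 : G6.Colorable 2 := by
  have hval : ∀ v w : Fin 6, G6.Adj v w →
      (⟨v.val % 2, by omega⟩ : Fin 2) ≠ ⟨w.val % 2, by omega⟩ := by decide
  exact ⟨SimpleGraph.Coloring.mk (fun v => ⟨v.val % 2, by omega⟩) (fun h => hval _ _ h)⟩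

/-- Bipartite graphs contain every clique as a subdivision but no `K_t`, `t ≥ 3`, as a
totally odd immersion; in particular subdivisions and totally odd immersions are
incomparable containment relations. -/
theorem statement17 :
    (∀ (V : Type) (H : SimpleGraph V), H.Colorable 2 →
      (∀ t : ℕ, ContainsSubdivision H (⊤ : SimpleGraph (Fin t))) →
      ∀ t : ℕ, 3 ≤ t → ¬ TotallyOddCliqueImmersion H t) ∧
    (∃ (n : ℕ) (G : SimpleGraph (Fin n)),
      ContainsSubdivision G (⊤ : SimpleGraph (Fin 3)) ∧ ¬ TotallyOddCliqueImmersion G 3) ∧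
    (∃ (n : ℕ) (G : SimpleGraph (Fin n)),
      TotallyOddCliqueImmersion G 5 ∧ ¬ ContainsSubdivision G (⊤ : SimpleGraph (Fin 5))) := by
  refine ⟨fun V H hc _ t ht => no_toi_of_colorable hc t ht,
    ⟨6, G6, sub6, no_toi_of_colorable col6 3 le_rfl⟩,
    ⟨20, G20, toi20, noSub20⟩⟩
end
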